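/- arXiv:2306.07658 — 8 statements merged into one kernel-verified Lean document; each statement's English description precedes it below -/
import Mathlib

section
/- For solutions of the undelayed weighted Hegselmann-Krause system with K := ‖ψ‖_∞, for all indices i, j, every unit vector v ∈ ℝ^d, every n and all times t ≥ t̄ ≥ t_n, one has ⟨x_i(t) − x_j(t), v⟩ ≤ e^{−K(t−t̄)} ⟨x_i(t̄) − x_j(t̄), v⟩ + (1 − e^{−K(t−t̄)}) d(t_n). -/
/-!
Project everything onto the unit vector `v`: the scalars `⟪x k, v⟫` obey a linear consensus
system with nonnegative weights. A maximal projection can only decrease and a minimal one only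
increase, so from time `t_n` on all projections stay in an interval of length at most `d(t_n)`.
Using `ψ ≤ K` and `α ≤ 1`, the gap `f = ⟪x i - x j, v⟫` then satisfies `f' ≤ K (d(t_n) - f)`,
and the estimate is the corresponding Grönwall bound.
-/

open scoped RealInnerProductSpace
open Filter Topology Set Finset Real

theorem eventually_lt_add_mul_sub_of_hasDerivAt {f : ℝ → ℝ} {f' r x : ℝ}
    (hf : HasDerivAt f f' x) (hr : f' < r) :
    ∀ᶠ z in 𝓝[>] x, f z < f x + r * (z - x) := by
  filter_upwards [hf.hasDerivWithinAt.limsup_slope_le' (lt_irrefl x) hr, self_mem_nhdsWithin]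
    with z hslope hz
  rw [slope_def_field, div_lt_iff₀ (sub_pos.2 hz)] at hslope
  linarith

theorem le_of_hasDerivAt_nonpos_at_max {ι : Type*} [Fintype ι] [Nonempty ι] {g d : ι → ℝ → ℝ}
    {a b C : ℝ} (hg : ∀ k, ∀ s ∈ Icc a b, HasDerivAt (g k) (d k s) s)
    (hd : ∀ k, ∀ s ∈ Ico a b, (∀ l, g l s ≤ g k s) → d k s ≤ 0) (ha : ∀ k, g k a ≤ C) :
    ∀ s ∈ Icc a b, ∀ k, g k s ≤ C := by
  set G : ℝ → ℝ := fun s => univ.sup' univ_nonempty fun k => g k s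
  have hgG : ∀ k s, g k s ≤ G s := fun k s => le_sup' (fun k => g k s) (mem_univ k)
  have hG : ∀ s ∈ Icc a b, G s ≤ C := by
    refine image_le_of_liminf_slope_right_le_deriv_boundary (B' := fun _ => 0)
      (fun s hs => (ContinuousAt.finset_sup'_apply univ_nonempty fun k _ =>
        (hg k s hs).continuousAt).continuousWithinAt)
      (sup'_le _ _ fun k _ => ha k) continuousOn_const
      (fun s _ => hasDerivWithinAt_const s _ C) fun s hs r hr => ?_
    have hnear : ∀ k, ∀ᶠ z in 𝓝[>] s, g k z < G s + r * (z - s) := by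
      intro k
      rcases (hgG k s).eq_or_lt with hmax | hlt
      · rw [← hmax]
        exact eventually_lt_add_mul_sub_of_hasDerivAt (hg k s (Ico_subset_Icc_self hs))
          ((hd k s hs fun l => hmax ▸ hgG l s).trans_lt hr)
      · filter_upwards [((hg k s (Ico_subset_Icc_self hs)).continuousAt.eventually_lt
          continuousAt_const hlt).filter_mono nhdsWithin_le_nhds, self_mem_nhdsWithin]
          with z hz hzs
        linarith [mul_pos hr (sub_pos.2 (mem_Ioi.1 hzs))]
    refine (((eventually_all.2 hnear).and self_mem_nhdsWithin).mono ?_).frequently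
    rintro z ⟨hz, hzs⟩
    rw [slope_def_field, div_lt_iff₀ (sub_pos.2 hzs)]
    linarith [(sup'_lt_iff univ_nonempty).2 fun k _ => hz k]
  exact fun s hs k => (hgG k s).trans (hG s hs)

theorem le_exp_mul_add_of_hasDerivAt_le {f f' : ℝ → ℝ} {a b K D : ℝ} (hab : a ≤ b)
    (hf : ∀ s ∈ Icc a b, HasDerivAt f (f' s) s) (hf' : ∀ s ∈ Ioo a b, f' s ≤ K * (D - f s)) :
    f b ≤ exp (-K * (b - a)) * f a + (1 - exp (-K * (b - a))) * D := by
  set h : ℝ → ℝ := fun s => exp (K * (s - a)) * (f s - D)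
  have hh : ∀ s ∈ Icc a b,
      HasDerivAt h (exp (K * (s - a)) * (f' s - K * (D - f s))) s := by
    intro s hs
    exact ((((hasDerivAt_id' s).sub_const a).const_mul K).exp.mul
      ((hf s hs).sub_const D)).congr_deriv (by ring)
  have hanti : AntitoneOn h (Icc a b) := by
    refine antitoneOn_of_hasDerivWithinAt_nonpos (convex_Icc a b)
      (f' := fun s => exp (K * (s - a)) * (f' s - K * (D - f s)))
      (fun s hs => (hh s hs).continuousAt.continuousWithinAt) (fun s hs => ?_) fun s hs => ?_
    · rw [interior_Icc] at hs
      exact (hh s (Ioo_subset_Icc_self hs)).hasDerivWithinAt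
    · rw [interior_Icc] at hs
      exact mul_nonpos_of_nonneg_of_nonpos (exp_pos _).le (sub_nonpos.2 (hf' s hs))
  have hba : exp (K * (b - a)) * (f b - D) ≤ f a - D := by
    simpa [h] using hanti (left_mem_Icc.2 hab) (right_mem_Icc.2 hab) hab
  have hscaled := mul_le_mul_of_nonneg_left hba (exp_pos (-K * (b - a))).le
  rw [← mul_assoc, ← exp_add, neg_mul, neg_add_cancel, exp_zero, one_mul] at hscaled
  rw [neg_mul]
  linarith

section Consensus

variable {ι : Type*} [Fintype ι] [DecidableEq ι]

def consensusVelocity (c : ℝ → ℝ) (w : ι → ι → ℝ → ℝ) (g : ι → ℝ → ℝ) (k : ι) (s : ℝ) : ℝ :=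
  c s * ∑ l ∈ univ.filter (· ≠ k), w k l s * (g l s - g k s)

def HasConsensusDynamics (c : ℝ → ℝ) (w : ι → ι → ℝ → ℝ) (g : ι → ℝ → ℝ) (a : ℝ) : Prop :=
  ∀ k, ∀ s ∈ Ici a, HasDerivAt (g k) (consensusVelocity c w g k s) s

variable {c : ℝ → ℝ} {w : ι → ι → ℝ → ℝ} {g : ι → ℝ → ℝ} {a K : ℝ}

theorem consensusVelocity_neg (k : ι) (s : ℝ) :
    consensusVelocity c w (-g) k s = -consensusVelocity c w g k s := by
  simp only [consensusVelocity, Pi.neg_apply, ← mul_neg, ← sum_neg_distrib]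
  congr! 2 with l
  ring

theorem HasConsensusDynamics.neg (H : HasConsensusDynamics c w g a) :
    HasConsensusDynamics c w (-g) a := fun k s hs => by
  rw [consensusVelocity_neg]
  exact (H k s hs).neg

theorem card_filter_ne_eq (k : ι) : ((univ.filter (· ≠ k)).card : ℝ) = Fintype.card ι - 1 := by
  rw [filter_ne', card_erase_of_mem (mem_univ k), card_univ,
    Nat.cast_sub (Fintype.card_pos_iff.2 ⟨k⟩)]
  simp

theorem consensusVelocity_nonpos_of_isMax {k : ι} {s : ℝ} (hc : 0 ≤ c s)
    (hw : ∀ l, 0 ≤ w k l s) (hmax : ∀ l, g l s ≤ g k s) : consensusVelocity c w g k s ≤ 0 :=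
  mul_nonpos_of_nonneg_of_nonpos hc <| sum_nonpos fun l _ =>
    mul_nonpos_of_nonneg_of_nonpos (hw l) (sub_nonpos.2 (hmax l))

theorem consensusVelocity_le {k : ι} {s M : ℝ} (hc : 0 ≤ c s)
    (hc₁ : c s * (Fintype.card ι - 1) ≤ 1) (hw : ∀ l, 0 ≤ w k l s) (hwK : ∀ l, w k l s ≤ K)
    (hM : ∀ l, g l s ≤ M) : consensusVelocity c w g k s ≤ K * (M - g k s) := by
  have hMk : 0 ≤ K * (M - g k s) := mul_nonneg ((hw k).trans (hwK k)) (sub_nonneg.2 (hM k))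
  calc consensusVelocity c w g k s
      ≤ c s * ∑ _l ∈ univ.filter (· ≠ k), K * (M - g k s) := by
        refine mul_le_mul_of_nonneg_left (sum_le_sum fun l _ => ?_) hc
        exact (mul_le_mul_of_nonneg_left (sub_le_sub_right (hM l) _) (hw l)).trans
          (mul_le_mul_of_nonneg_right (hwK l) (sub_nonneg.2 (hM k)))
    _ = c s * (Fintype.card ι - 1) * (K * (M - g k s)) := by
        rw [sum_const, nsmul_eq_mul, card_filter_ne_eq, mul_assoc]
    _ ≤ K * (M - g k s) := mul_le_of_le_one_left hMk hc₁

theorem HasConsensusDynamics.le_of_forall_le (H : HasConsensusDynamics c w g a)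
    (hc : ∀ s, 0 ≤ c s) (hw : ∀ k l s, 0 ≤ w k l s) {M : ℝ} (hM : ∀ k, g k a ≤ M) :
    ∀ s, a ≤ s → ∀ k, g k s ≤ M := by
  cases isEmpty_or_nonempty ι
  · exact fun _ _ k => isEmptyElim k
  exact fun s has => le_of_hasDerivAt_nonpos_at_max (fun k r hr => H k r hr.1)
    (fun k r _ hmax => consensusVelocity_nonpos_of_isMax (hc r) (hw k · r) hmax) hM s
    ⟨has, le_rfl⟩

theorem HasConsensusDynamics.sub_le_exp_mul_add (H : HasConsensusDynamics c w g a)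
    (hc : ∀ s, 0 ≤ c s) (hc₁ : ∀ s, c s * (Fintype.card ι - 1) ≤ 1)
    (hw : ∀ k l s, 0 ≤ w k l s) (hwK : ∀ k l s, w k l s ≤ K) {D : ℝ}
    (hD : ∀ k l, g k a - g l a ≤ D) (i j : ι) {t₀ t : ℝ} (ht₀ : a ≤ t₀) (ht : t₀ ≤ t) :
    g i t - g j t ≤ exp (-K * (t - t₀)) * (g i t₀ - g j t₀) + (1 - exp (-K * (t - t₀))) * D := by
  have : Nonempty ι := ⟨i⟩
  obtain ⟨kmax, hkmax⟩ := Finite.exists_max fun k => g k a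
  obtain ⟨kmin, hkmin⟩ := Finite.exists_min fun k => g k a
  have hup := H.le_of_forall_le hc hw hkmax
  have hlo := H.neg.le_of_forall_le hc hw fun k => neg_le_neg (hkmin k)
  refine le_exp_mul_add_of_hasDerivAt_le (f := fun s => g i s - g j s) ht
    (fun s hs => (H i s (ht₀.trans hs.1)).sub (H j s (ht₀.trans hs.1))) fun s hs => ?_
  have has : a ≤ s := ht₀.trans hs.1.le
  have hvi := consensusVelocity_le (hc s) (hc₁ s) (hw i · s) (hwK i · s) (hup s has)
  have hvj := consensusVelocity_le (hc s) (hc₁ s) (hw j · s) (hwK j · s) (hlo s has)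
  rw [consensusVelocity_neg] at hvj
  simp only [Pi.neg_apply] at hvj
  have hK : 0 ≤ K := (hw i i s).trans (hwK i i s)
  have hgap := mul_le_mul_of_nonneg_left (hD kmax kmin) hK
  linarith

end Consensus

theorem hasConsensusDynamics_inner {ι E : Type*} [Fintype ι] [DecidableEq ι]
    [NormedAddCommGroup E] [InnerProductSpace ℝ E] {c : ℝ → ℝ} {w : ι → ι → ℝ → ℝ}
    {x : ι → ℝ → E} {a : ℝ}
    (hx : ∀ k, ∀ s ∈ Ici a, HasDerivAt (x k)
      (c s • ∑ l ∈ univ.filter (· ≠ k), w k l s • (x l s - x k s)) s) (v : E) :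
    HasConsensusDynamics c w (fun k s => ⟪x k s, v⟫) a := fun k s hs =>
  ((hx k s hs).inner ℝ (hasDerivAt_const s v)).congr_deriv <| by
    simp only [consensusVelocity, inner_zero_right, zero_add, real_inner_smul_left, sum_inner,
      inner_sub_left]

theorem hk_projected_diameter_estimate_general
    {dim N : ℕ}
    (ψ : EuclideanSpace ℝ (Fin dim) → EuclideanSpace ℝ (Fin dim) → ℝ)
    (hψpos : ∀ y z, 0 < ψ y z)
    (α : ℝ → ℝ) (hα01 : ∀ t, α t ∈ Set.Icc (0:ℝ) 1)
    (x : Fin N → ℝ → EuclideanSpace ℝ (Fin dim))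
    (hode : ∀ i t, 0 ≤ t → HasDerivAt (x i)
      ((α t / ((N : ℝ) - 1)) •
        ∑ j ∈ Finset.univ.filter (fun j => j ≠ i),
          ψ (x i t) (x j t) • (x j t - x i t)) t)
    (K : ℝ) (hK : ∀ y z, ψ y z ≤ K)
    (diam : ℝ → ℝ) (hdiam : ∀ t, diam t = ⨆ i, ⨆ j, ‖x i t - x j t‖)
    (tseq : ℕ → ℝ) (htseq0 : 0 ≤ tseq 0) (htseqmono : StrictMono tseq)
    (i j : Fin N) (v : EuclideanSpace ℝ (Fin dim)) (hv : ‖v‖ = 1)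
    (n : ℕ) (tbar t : ℝ) (h1 : tseq n ≤ tbar) (h2 : tbar ≤ t) :
    ⟪x i t - x j t, v⟫ ≤ Real.exp (-K * (t - tbar)) * ⟪x i tbar - x j tbar, v⟫
      + (1 - Real.exp (-K * (t - tbar))) * diam (tseq n) := by
  have ha : 0 ≤ tseq n := htseq0.trans (htseqmono.monotone n.zero_le)
  have H : HasConsensusDynamics (fun s => α s / ((N : ℝ) - 1))
      (fun k l s => ψ (x k s) (x l s)) (fun k s => ⟪x k s, v⟫) (tseq n) :=
    hasConsensusDynamics_inner (fun k s hs => hode k s (ha.trans hs)) v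
  have hc : ∀ s, 0 ≤ α s / ((N : ℝ) - 1) := fun s =>
    div_nonneg (hα01 s).1 (sub_nonneg.2 (Nat.one_le_cast.2 i.pos))
  have hc₁ : ∀ s, α s / ((N : ℝ) - 1) * (Fintype.card (Fin N) - 1) ≤ 1 := by
    intro s
    rw [Fintype.card_fin]
    rcases eq_or_ne ((N : ℝ) - 1) 0 with hN | hN
    · -- `N = 1`: division by zero makes the rate `0`
      simp [hN]
    · rw [div_mul_cancel₀ _ hN]
      exact (hα01 s).2
  have hD : ∀ k l, ⟪x k (tseq n), v⟫ - ⟪x l (tseq n), v⟫ ≤ diam (tseq n) := by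
    intro k l
    rw [← inner_sub_left, hdiam]
    calc ⟪x k (tseq n) - x l (tseq n), v⟫ ≤ ‖x k (tseq n) - x l (tseq n)‖ := by
          simpa [hv] using real_inner_le_norm (x k (tseq n) - x l (tseq n)) v
      _ ≤ ⨆ k, ⨆ l, ‖x k (tseq n) - x l (tseq n)‖ :=
          (le_ciSup (Finite.bddAbove_range _) l).trans
            (le_ciSup (Finite.bddAbove_range fun k => ⨆ l, ‖x k (tseq n) - x l (tseq n)‖) k)
  simpa only [inner_sub_left] using H.sub_le_exp_mul_add hc hc₁ (fun _ _ _ => (hψpos _ _).le)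
    (fun _ _ _ => hK _ _) hD i j h1 h2

/-- Gronwall-type projected diameter estimate for the undelayed system. -/
theorem hk_projected_diameter_estimate
    {dim N : ℕ} (hN : 2 ≤ N)
    (ψ : EuclideanSpace ℝ (Fin dim) → EuclideanSpace ℝ (Fin dim) → ℝ)
    (hψpos : ∀ y z, 0 < ψ y z)
    (hψbdd : ∃ K, ∀ y z, ψ y z ≤ K)
    (hψcont : Continuous fun p : EuclideanSpace ℝ (Fin dim) × EuclideanSpace ℝ (Fin dim) => ψ p.1 p.2)
    (α : ℝ → ℝ) (hαcont : Continuous α) (hα01 : ∀ t, α t ∈ Set.Icc (0:ℝ) 1)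
    (x : Fin N → ℝ → EuclideanSpace ℝ (Fin dim))
    (hode : ∀ i t, 0 ≤ t → HasDerivAt (x i)
      ((α t / ((N : ℝ) - 1)) •
        ∑ j ∈ Finset.univ.filter (fun j => j ≠ i),
          ψ (x i t) (x j t) • (x j t - x i t)) t)
    (K : ℝ) (hK : ∀ y z, ψ y z ≤ K)
    (diam : ℝ → ℝ) (hdiam : ∀ t, diam t = ⨆ i, ⨆ j, ‖x i t - x j t‖)
    (tseq : ℕ → ℝ) (htseq0 : 0 ≤ tseq 0) (htseqmono : StrictMono tseq)
    (i j : Fin N) (v : EuclideanSpace ℝ (Fin dim)) (hv : ‖v‖ = 1)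
    (n : ℕ) (tbar t : ℝ) (h1 : tseq n ≤ tbar) (h2 : tbar ≤ t) :
    ⟪x i t - x j t, v⟫ ≤ Real.exp (-K * (t - tbar)) * ⟪x i tbar - x j tbar, v⟫
      + (1 - Real.exp (-K * (t - tbar))) * diam (tseq n) :=
  hk_projected_diameter_estimate_general ψ hψpos α hα01 x hode K hK diam hdiam tseq htseq0 htseqmono
    i j v hv n tbar t h1 h2
end

section
/- Consider the undelayed weighted Hegselmann-Krause system where the weight α satisfies: there exist T > 0 and times 0 = t_0 < t_1 < ... with t_n − t_{n−1} ≤ T and ∫_{t_{n−1}}^{t_n} α(t) dt ≥ ᾱ > 0 for all n. Then there is a constant C ∈ (0,1), independent of N, namely C = max{1 − e^{−KT}, 1 − ψ_0 e^{−KT} ᾱ}, such that d(t_n) ≤ C · d(t_{n−1}) for all n ≥ 1, where K = ‖ψ‖_∞ and ψ_0 = min_{|y|,|z| ≤ M^0} ψ(y,z) with M^0 = max_i |x_i(0)|. -/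
/-!
Both estimates compare the maximum of finitely many smooth functions with a barrier, looking
only at a member where the maximum is attained. At an agent of maximal norm every term of the
drift points inwards, so the agents never leave the ball of radius `M⁰`, on which `ψ ≥ ψ₀ > 0`.
At a farthest pair `(i, j)` every agent lies between `x_i` and `x_j` along `u = x_i - x_j`,
whence `d/dt ‖u‖² ≤ -2 ψ₀ α ‖u‖²` (using `N / (N - 1) ≥ 1`). Grönwall then gives
`d(t_n) ≤ exp (-ψ₀ ∫ α) d(t_{n-1}) ≤ e^{-ψ₀ ᾱ} d(t_{n-1})`, and `e^{-s} ≤ 1 - s e^{-L}` for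
`0 ≤ s = ψ₀ ᾱ ≤ L = K T` bounds the factor by `C`.
-/

open Set Filter Finset Real
open scoped Topology RealInnerProductSpace

section FiniteMax

variable {ι : Type*} [Fintype ι] [Nonempty ι]

lemma eventually_slope_sup'_lt {g : ι → ℝ → ℝ} {g' : ι → ℝ} {t r : ℝ}
    (hcont : ∀ i, ContinuousAt (g i) t)
    (hderiv : ∀ i, (∀ j, g j t ≤ g i t) → HasDerivAt (g i) (g' i) t)
    (hr : ∀ i, (∀ j, g j t ≤ g i t) → g' i < r) :
    ∀ᶠ z in 𝓝[>] t, slope (fun s => univ.sup' univ_nonempty (g · s)) t z < r := by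
  set F := fun s => univ.sup' univ_nonempty (g · s)
  have hle : ∀ i, g i t ≤ F t := fun i => le_sup' (g · t) (mem_univ i)
  have hbelow : ∀ i, ∀ᶠ z in 𝓝[>] t, g i z < F t + r * (z - t) := by
    intro i
    by_cases hi : ∀ j, g j t ≤ g i t
    · have hFi : F t = g i t := le_antisymm (sup'_le _ _ fun j _ => hi j) (hle i)
      have hslope : ∀ᶠ z in 𝓝[>] t, slope (g i) t z < r :=
        (hasDerivAt_iff_tendsto_slope.1 (hderiv i hi) |>.eventually_lt_const (hr i hi)).filter_mono
          (nhdsWithin_mono _ fun z hz => ne_of_gt hz)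
      filter_upwards [hslope, self_mem_nhdsWithin] with z hz hzt
      rw [slope_def_field, div_lt_iff₀ (sub_pos.2 hzt)] at hz
      linarith
    · obtain ⟨j, hj⟩ := not_forall.1 hi
      have hlim : Tendsto (fun z => g i z - r * (z - t)) (𝓝 t) (𝓝 (g i t - r * (t - t))) :=
        ((hcont i).sub (continuousAt_const.mul (continuousAt_id.sub continuousAt_const))).tendsto
      filter_upwards [nhdsWithin_le_nhds (hlim.eventually_lt_const
        (show g i t - r * (t - t) < F t by linarith [hle j, not_le.1 hj]))] with z hz
      linarith
  filter_upwards [eventually_all.2 hbelow, self_mem_nhdsWithin] with z hz hzt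
  have hFz : F z < F t + r * (z - t) := (sup'_lt_iff _).2 fun i _ => hz i
  rw [slope_def_field, div_lt_iff₀ (sub_pos.2 hzt)]
  linarith

theorem image_le_of_isMax_deriv_lt_deriv_boundary {g g' : ι → ℝ → ℝ} {B B' : ℝ → ℝ} {a b : ℝ}
    (hg : ∀ i, ∀ t ∈ Icc a b, HasDerivAt (g i) (g' i t) t)
    (hB : ∀ t ∈ Icc a b, HasDerivAt B (B' t) t)
    (ha : ∀ i, g i a ≤ B a)
    (hbound : ∀ t ∈ Ico a b, ∀ i, (∀ j, g j t ≤ g i t) → g i t = B t → g' i t < B' t) :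
    ∀ t ∈ Icc a b, ∀ i, g i t ≤ B t := by
  classical
  set F := fun s => univ.sup' univ_nonempty (g · s)
  have hargmax : ∀ t, (univ.filter fun i => ∀ j, g j t ≤ g i t).Nonempty := fun t => by
    obtain ⟨i, -, hi⟩ := exists_max_image univ (g · t) univ_nonempty
    exact ⟨i, by simpa using hi⟩
  have hFeq : ∀ t i, (∀ j, g j t ≤ g i t) → F t = g i t := fun t i hi =>
    le_antisymm (sup'_le _ _ fun j _ => hi j) (le_sup' (g · t) (mem_univ i))
  -- right Dini derivative of `F`: the largest derivative among the maximal members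
  set F' := fun t => (univ.filter fun i => ∀ j, g j t ≤ g i t).sup' (hargmax t) (g' · t)
  have hF'le : ∀ t i, (∀ j, g j t ≤ g i t) → g' i t ≤ F' t := fun t i hi =>
    le_sup' (g' · t) (mem_filter.2 ⟨mem_univ i, hi⟩)
  have hFB := image_le_of_liminf_slope_right_lt_deriv_boundary' (f := F) (f' := F')
    (ContinuousOn.finset_sup'_apply univ_nonempty fun i _ t ht =>
      (hg i t ht).continuousAt.continuousWithinAt)
    (fun t ht r hr => (eventually_slope_sup'_lt
      (fun i => (hg i t (Ico_subset_Icc_self ht)).continuousAt)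
      (fun i _ => hg i t (Ico_subset_Icc_self ht))
      (fun i hi => (hF'le t i hi).trans_lt hr)).frequently)
    (sup'_le _ _ fun i _ => ha i)
    (fun t ht => (hB t ht).continuousAt.continuousWithinAt)
    (fun t ht => (hB t (Ico_subset_Icc_self ht)).hasDerivWithinAt)
    (fun t ht hFt => (sup'_lt_iff _).2 fun i hi => by
      have hi := (mem_filter.1 hi).2
      exact hbound t ht i hi ((hFeq t i hi).symm.trans hFt))
  exact fun t ht i => (le_sup' (g · t) (mem_univ i)).trans (hFB ht)

theorem image_le_exp_mul_of_isMax_deriv_le {g g' : ι → ℝ → ℝ} {φ φ' : ℝ → ℝ} {a b M : ℝ}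
    (hg : ∀ i, ∀ t ∈ Icc a b, HasDerivAt (g i) (g' i t) t)
    (hφ : ∀ t ∈ Icc a b, HasDerivAt φ (φ' t) t)
    (ha : ∀ i, g i a ≤ M)
    (hmax : ∀ t ∈ Ico a b, ∀ i, (∀ j, g j t ≤ g i t) → g' i t ≤ φ' t * g i t) :
    ∀ t ∈ Icc a b, ∀ i, g i t ≤ exp (φ t - φ a) * M := by
  intro t ht i
  set ρ := fun s => exp (φ s - φ a)
  -- the strict barriers `ρ (M + ε e^{s-a})` cannot be touched by a maximal member
  have hbarrier : ∀ ε > 0, g i t ≤ ρ t * (M + ε * exp (t - a)) := by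
    intro ε hε
    refine image_le_of_isMax_deriv_lt_deriv_boundary hg
      (B := fun s => ρ s * (M + ε * exp (s - a)))
      (B' := fun s => φ' s * (ρ s * (M + ε * exp (s - a))) + ρ s * (ε * exp (s - a)))
      (fun s hs => ?_) (fun j => ?_) (fun s hs j hj hjB => ?_) t ht i
    · have := ((hφ s hs).sub_const (φ a)).exp.mul
        ((((hasDerivAt_id s).sub_const a).exp.const_mul ε).const_add M)
      exact this.congr_deriv (by simp only [ρ, id]; ring)
    · simp only [ρ, sub_self, exp_zero, one_mul, mul_one]
      linarith [ha j]
    · have hpos : 0 < ρ s * (ε * exp (s - a)) := by positivity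
      have := hmax s hs j hj
      rw [hjB] at this
      linarith
  refine ge_of_tendsto (x := 𝓝[>] 0) ?_ (eventually_nhdsWithin_of_forall hbarrier)
  have : Continuous fun ε : ℝ => ρ t * (M + ε * exp (t - a)) := by fun_prop
  simpa using (this.tendsto 0).mono_left nhdsWithin_le_nhds

end FiniteMax

section Drift

variable {E : Type*} [NormedAddCommGroup E] [InnerProductSpace ℝ E] {ι : Type*} [Fintype ι]

lemma inner_sub_self_nonpos_of_norm_le {u y : E} (h : ‖y‖ ≤ ‖u‖) : ⟪u, y - u⟫ ≤ 0 := by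
  rw [inner_sub_right, real_inner_self_eq_norm_sq]
  nlinarith [real_inner_le_norm u y, norm_nonneg u]

def hkDrift (ψ : E → E → ℝ) (y : ι → E) (i : ι) : E :=
  ∑ j, ψ (y i) (y j) • (y j - y i)

lemma sum_filter_ne_eq_hkDrift [DecidableEq ι] (ψ : E → E → ℝ) (y : ι → E) (i : ι) :
    ∑ j ∈ univ.filter (fun j => j ≠ i), ψ (y i) (y j) • (y j - y i) = hkDrift ψ y i :=
  sum_filter_of_ne fun j _ h hji => h (by simp [hji])

variable {ψ : E → E → ℝ} {y : ι → E}

lemma inner_hkDrift_nonpos (hψ : ∀ y z, 0 ≤ ψ y z) {i : ι} (hi : ∀ j, ‖y j‖ ≤ ‖y i‖) :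
    ⟪y i, hkDrift ψ y i⟫ ≤ 0 := by
  rw [hkDrift, inner_sum]
  exact sum_nonpos fun j _ => by
    rw [real_inner_smul_right]
    exact mul_nonpos_of_nonneg_of_nonpos (hψ _ _) (inner_sub_self_nonpos_of_norm_le (hi j))

lemma inner_hkDrift_sub_le {m : ℝ} (hm : ∀ k l, m ≤ ψ (y k) (y l)) {i j : ι}
    (hij : ∀ k l, ‖y k - y l‖ ≤ ‖y i - y j‖) :
    ⟪y i - y j, hkDrift ψ y i - hkDrift ψ y j⟫ ≤ -(Fintype.card ι * m) * ‖y i - y j‖ ^ 2 := by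
  set u := y i - y j
  -- the farthest pair sees every agent behind `y i` and ahead of `y j` along `u`
  have hbehind : ∀ k, ⟪u, y k - y i⟫ ≤ 0 := fun k => by
    simpa [u] using inner_sub_self_nonpos_of_norm_le (u := u) (hij k j)
  have hahead : ∀ k, 0 ≤ ⟪u, y k - y j⟫ := fun k => by
    have := inner_sub_self_nonpos_of_norm_le (u := u) (hij i k)
    rw [show y i - y k - u = -(y k - y j) by simp only [u]; abel, inner_neg_right] at this
    linarith
  calc ⟪u, hkDrift ψ y i - hkDrift ψ y j⟫
      = ∑ k, ψ (y i) (y k) * ⟪u, y k - y i⟫ - ∑ k, ψ (y j) (y k) * ⟪u, y k - y j⟫ := by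
        simp only [hkDrift, inner_sub_right, inner_sum, real_inner_smul_right]
    _ ≤ ∑ k, m * ⟪u, y k - y i⟫ - ∑ k, m * ⟪u, y k - y j⟫ :=
        sub_le_sub (sum_le_sum fun k _ => mul_le_mul_of_nonpos_right (hm i k) (hbehind k))
          (sum_le_sum fun k _ => mul_le_mul_of_nonneg_right (hm j k) (hahead k))
    _ = ∑ _k : ι, m * ⟪u, -u⟫ := by
        rw [← sum_sub_distrib]
        refine sum_congr rfl fun k _ => ?_
        rw [← mul_sub, ← inner_sub_right]
        congr 2
        simp only [u]; abel
    _ = -(Fintype.card ι * m) * ‖u‖ ^ 2 := by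
        simp only [sum_const, card_univ, nsmul_eq_mul, inner_neg_right,
          real_inner_self_eq_norm_sq]
        ring

end Drift

section Flow

variable {E : Type*} [NormedAddCommGroup E] [InnerProductSpace ℝ E] {ι : Type*} [Fintype ι]
  [Nonempty ι] {ψ : E → E → ℝ} {κ : ℝ → ℝ} {x : ι → ℝ → E} {a b : ℝ}

theorem norm_le_of_hasDerivAt_hkDrift (hψ : ∀ y z, 0 ≤ ψ y z) (hκ : ∀ t ∈ Ico a b, 0 ≤ κ t)
    (hx : ∀ i, ∀ t ∈ Icc a b, HasDerivAt (x i) (κ t • hkDrift ψ (x · t) i) t)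
    {M : ℝ} (ha : ∀ i, ‖x i a‖ ≤ M) : ∀ t ∈ Icc a b, ∀ i, ‖x i t‖ ≤ M := by
  have hmax : ∀ t ∈ Ico a b, ∀ i, (∀ j, ‖x j t‖ ^ 2 ≤ ‖x i t‖ ^ 2) →
      2 * ⟪x i t, κ t • hkDrift ψ (x · t) i⟫ ≤ 0 * ‖x i t‖ ^ 2 := fun t ht i hi => by
    have := inner_hkDrift_nonpos hψ (y := (x · t))
      fun j => (sq_le_sq₀ (norm_nonneg _) (norm_nonneg _)).1 (hi j)
    rw [real_inner_smul_right]
    nlinarith [hκ t ht]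
  have hsq := image_le_exp_mul_of_isMax_deriv_le (φ := fun _ => 0) (M := M ^ 2)
    (fun i t ht => (hx i t ht).norm_sq) (fun t _ => hasDerivAt_const t 0)
    (fun i => pow_le_pow_left₀ (norm_nonneg _) (ha i) 2) hmax
  intro t ht i
  have hM : 0 ≤ M := (norm_nonneg _).trans (ha i)
  simpa [sq_le_sq₀ (norm_nonneg _) hM] using hsq t ht i

theorem norm_sub_le_exp_mul_of_hasDerivAt_hkDrift {m : ℝ}
    (hm : ∀ t ∈ Ico a b, ∀ k l, m ≤ ψ (x k t) (x l t)) (hκ : ∀ t ∈ Ico a b, 0 ≤ κ t)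
    (hx : ∀ i, ∀ t ∈ Icc a b, HasDerivAt (x i) (κ t • hkDrift ψ (x · t) i) t)
    {Φ φ : ℝ → ℝ} (hΦ : ∀ t ∈ Icc a b, HasDerivAt Φ (φ t) t)
    (hφ : ∀ t ∈ Ico a b, φ t ≤ Fintype.card ι * m * κ t)
    {D : ℝ} (ha : ∀ k l, ‖x k a - x l a‖ ≤ D) :
    ∀ t ∈ Icc a b, ∀ i j, ‖x i t - x j t‖ ≤ exp (Φ a - Φ t) * D := by
  have hmax : ∀ t ∈ Ico a b, ∀ p : ι × ι,
      (∀ q : ι × ι, ‖x q.1 t - x q.2 t‖ ^ 2 ≤ ‖x p.1 t - x p.2 t‖ ^ 2) →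
      2 * ⟪x p.1 t - x p.2 t, κ t • hkDrift ψ (x · t) p.1 - κ t • hkDrift ψ (x · t) p.2⟫ ≤
        -2 * φ t * ‖x p.1 t - x p.2 t‖ ^ 2 := by
    rintro t ht ⟨i, j⟩ hij
    have := inner_hkDrift_sub_le (hm t ht)
      fun k l => (sq_le_sq₀ (norm_nonneg _) (norm_nonneg _)).1 (hij (k, l))
    rw [← smul_sub, real_inner_smul_right]
    nlinarith [mul_le_mul_of_nonneg_left this (hκ t ht),
      mul_le_mul_of_nonneg_right (hφ t ht) (sq_nonneg ‖x i t - x j t‖)]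
  have hsq := image_le_exp_mul_of_isMax_deriv_le (φ := fun t => -2 * Φ t) (M := D ^ 2)
    (fun p t ht => ((hx p.1 t ht).sub (hx p.2 t ht)).norm_sq) (fun t ht => (hΦ t ht).const_mul (-2))
    (fun p => pow_le_pow_left₀ (norm_nonneg _) (ha p.1 p.2) 2) hmax
  intro t ht i j
  have hD : 0 ≤ D := (norm_nonneg _).trans (ha i i)
  refine (sq_le_sq₀ (norm_nonneg _) (by positivity)).1 ((hsq t ht (i, j)).trans_eq ?_)
  rw [mul_pow, sq (exp _), ← exp_add]
  ring_nf

theorem norm_sub_le_exp_neg_mul_integral_of_hasDerivAt_hkDrift {α : ℝ → ℝ}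
    (hαcont : Continuous α) (hα : ∀ t, 0 ≤ α t) (hcard : 1 < Fintype.card ι) {m : ℝ} (hm₀ : 0 ≤ m)
    (hm : ∀ t ∈ Ico a b, ∀ k l, m ≤ ψ (x k t) (x l t))
    (hx : ∀ i, ∀ t ∈ Icc a b,
      HasDerivAt (x i) ((α t / ((Fintype.card ι : ℝ) - 1)) • hkDrift ψ (x · t) i) t)
    (hab : a ≤ b) {D : ℝ} (ha : ∀ k l, ‖x k a - x l a‖ ≤ D) (i j : ι) :
    ‖x i b - x j b‖ ≤ exp (-(m * ∫ t in a..b, α t)) * D := by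
  have hcard₁ : (0 : ℝ) < Fintype.card ι - 1 := sub_pos.2 (by exact_mod_cast hcard)
  have h := norm_sub_le_exp_mul_of_hasDerivAt_hkDrift (Φ := fun t => m * ∫ s in a..t, α s)
    (φ := fun t => m * α t) hm (fun t _ => div_nonneg (hα t) hcard₁.le) hx
    (fun t _ => (hαcont.integral_hasStrictDerivAt a t).hasDerivAt.const_mul m)
    (fun t _ => by
      have : α t ≤ Fintype.card ι * (α t / (Fintype.card ι - 1)) := by
        rw [mul_div_assoc', le_div_iff₀ hcard₁]
        nlinarith [hα t]
      rw [mul_comm _ m, mul_assoc]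
      exact mul_le_mul_of_nonneg_left this hm₀)
    ha b ⟨hab, le_rfl⟩ i j
  simpa using h

end Flow

lemma zero_lt_sInf_setOf_norm_le {E : Type*} [NormedAddCommGroup E] [ProperSpace E]
    {ψ : E → E → ℝ} (hpos : ∀ y z, 0 < ψ y z) (hcont : Continuous fun p : E × E => ψ p.1 p.2)
    {M : ℝ} (hM : 0 ≤ M) : 0 < sInf {r | ∃ y z : E, ‖y‖ ≤ M ∧ ‖z‖ ≤ M ∧ ψ y z = r} := by
  have hset : {r | ∃ y z : E, ‖y‖ ≤ M ∧ ‖z‖ ≤ M ∧ ψ y z = r} =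
      (fun p : E × E => ψ p.1 p.2) '' (Metric.closedBall 0 M ×ˢ Metric.closedBall 0 M) := by
    ext r
    simp
  have hcpt := ((isCompact_closedBall (0 : E) M).prod (isCompact_closedBall 0 M)).image hcont
  rw [hset]
  obtain ⟨p, -, hp⟩ := hcpt.sInf_mem (Set.Nonempty.image _ ⟨(0, 0), by simp [hM]⟩)
  exact hp ▸ hpos _ _

lemma norm_sub_le_iSup_iSup {E ι : Type*} [SeminormedAddCommGroup E] [Finite ι] (y : ι → E)
    (i j : ι) : ‖y i - y j‖ ≤ ⨆ k, ⨆ l, ‖y k - y l‖ :=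
  (le_ciSup (finite_range _).bddAbove j).trans
    (le_ciSup (f := fun k => ⨆ l, ‖y k - y l‖) (finite_range _).bddAbove i)

lemma intervalIntegral_le_sub_of_mem_Icc {α : ℝ → ℝ} (hα : ∀ t, α t ∈ Set.Icc 0 1) {a b : ℝ}
    (hab : a ≤ b) : ∫ t in a..b, α t ≤ b - a := calc
  _ ≤ ‖∫ t in a..b, α t‖ := le_abs_self _
  _ ≤ 1 * |b - a| := intervalIntegral.norm_integral_le_of_norm_le_const fun t _ => by
      rw [Real.norm_eq_abs, abs_of_nonneg (hα t).1]; exact (hα t).2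
  _ = b - a := by rw [one_mul, abs_of_nonneg (sub_nonneg.2 hab)]

lemma exp_neg_le_one_sub_mul_exp_neg {s L : ℝ} (hs : 0 ≤ s) (hsL : s ≤ L) :
    exp (-s) ≤ 1 - s * exp (-L) := by
  have hL : s * exp (-L) ≤ s * exp (-s) := mul_le_mul_of_nonneg_left (exp_le_exp.2 (by linarith)) hs
  have hs1 : (s + 1) * exp (-s) ≤ 1 :=
    calc (s + 1) * exp (-s) ≤ exp s * exp (-s) :=
          mul_le_mul_of_nonneg_right (add_one_le_exp s) (exp_pos _).le
      _ = 1 := by rw [← exp_add, add_neg_cancel, exp_zero]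
  linarith

section ContractionConstant

variable {K T ψ₀ ā : ℝ}

lemma max_one_sub_exp_mem_Ioo (hK : 0 < K) (hT : 0 < T) (hψ₀ : 0 < ψ₀) (hā : 0 < ā) :
    max (1 - exp (-K * T)) (1 - ψ₀ * exp (-K * T) * ā) ∈ Set.Ioo 0 1 := by
  have hexp : exp (-K * T) < 1 := exp_lt_one_iff.2 (by nlinarith)
  refine ⟨lt_max_of_lt_left (by linarith), max_lt (by linarith [exp_pos (-K * T)]) ?_⟩
  nlinarith [mul_pos (mul_pos hψ₀ (exp_pos (-K * T))) hā]

lemma exp_neg_mul_le_max_one_sub_exp (hψ₀ : 0 ≤ ψ₀) (hā : 0 ≤ ā) (hψ₀K : ψ₀ ≤ K) (hāT : ā ≤ T) :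
    exp (-(ψ₀ * ā)) ≤ max (1 - exp (-K * T)) (1 - ψ₀ * exp (-K * T) * ā) := by
  refine le_max_of_le_right ((exp_neg_le_one_sub_mul_exp_neg (by positivity)
    (mul_le_mul hψ₀K hāT hā (hψ₀.trans hψ₀K))).trans_eq ?_)
  rw [neg_mul]
  ring

end ContractionConstant

theorem hk_diameter_contraction_general
    {dim N : ℕ} (hN : 2 ≤ N)
    (ψ : EuclideanSpace ℝ (Fin dim) → EuclideanSpace ℝ (Fin dim) → ℝ)
    (hψpos : ∀ y z, 0 < ψ y z)
    (hψcont : Continuous fun p : EuclideanSpace ℝ (Fin dim) × EuclideanSpace ℝ (Fin dim) => ψ p.1 p.2)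
    (α : ℝ → ℝ) (hαcont : Continuous α) (hα01 : ∀ t, α t ∈ Set.Icc (0:ℝ) 1)
    (x : Fin N → ℝ → EuclideanSpace ℝ (Fin dim))
    (hode : ∀ i t, 0 ≤ t → HasDerivAt (x i)
      ((α t / ((N : ℝ) - 1)) •
        ∑ j ∈ Finset.univ.filter (fun j => j ≠ i),
          ψ (x i t) (x j t) • (x j t - x i t)) t)
    (T abar : ℝ) (hT : 0 < T) (habar : 0 < abar)
    (tseq : ℕ → ℝ) (ht0 : tseq 0 = 0) (htmono : StrictMono tseq)
    (hgap : ∀ n : ℕ, tseq (n + 1) - tseq n ≤ T)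
    (hint : ∀ n : ℕ, abar ≤ ∫ t in (tseq n)..(tseq (n + 1)), α t)
    (K : ℝ) (hK : ∀ y z, ψ y z ≤ K)
    (M0 : ℝ) (hM0 : M0 = ⨆ i, ‖x i 0‖)
    (ψ0 : ℝ)
    (hψ0 : ψ0 = sInf {r : ℝ | ∃ y z : EuclideanSpace ℝ (Fin dim),
      ‖y‖ ≤ M0 ∧ ‖z‖ ≤ M0 ∧ ψ y z = r})
    (diam : ℝ → ℝ) (hdiam : ∀ t, diam t = ⨆ i, ⨆ j, ‖x i t - x j t‖)
    (C : ℝ)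
    (hC : C = max (1 - Real.exp (-K * T)) (1 - ψ0 * Real.exp (-K * T) * abar)) :
    C ∈ Set.Ioo (0:ℝ) 1 ∧ ∀ n : ℕ, 1 ≤ n → diam (tseq n) ≤ C * diam (tseq (n - 1)) := by
  have i₀ : Fin N := ⟨0, by omega⟩
  have : Nonempty (Fin N) := ⟨i₀⟩
  have hcard : 1 < Fintype.card (Fin N) := by rwa [Fintype.card_fin]
  have hx : ∀ i t, 0 ≤ t → HasDerivAt (x i)
      ((α t / ((Fintype.card (Fin N) : ℝ) - 1)) • hkDrift ψ (x · t) i) t := fun i t ht => by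
    simpa only [Fintype.card_fin, sum_filter_ne_eq_hkDrift] using hode i t ht
  have hball : ∀ t, 0 ≤ t → ∀ i, ‖x i t‖ ≤ M0 := fun t ht =>
    norm_le_of_hasDerivAt_hkDrift (fun y z => (hψpos y z).le)
      (fun s _ => div_nonneg (hα01 s).1 (sub_nonneg.2 (by exact_mod_cast hcard.le)))
      (fun i s hs => hx i s hs.1) (fun i => hM0 ▸ le_ciSup (f := fun i => ‖x i 0‖)
        (finite_range _).bddAbove i) t ⟨ht, le_rfl⟩
  have hψ0pos : 0 < ψ0 :=
    hψ0 ▸ zero_lt_sInf_setOf_norm_le hψpos hψcont ((norm_nonneg _).trans (hball 0 le_rfl i₀))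
  have hψ0le : ∀ t, 0 ≤ t → ∀ k l, ψ0 ≤ ψ (x k t) (x l t) := fun t ht k l =>
    hψ0 ▸ csInf_le ⟨0, by rintro _ ⟨y, z, -, -, rfl⟩; exact (hψpos y z).le⟩
      ⟨_, _, hball t ht k, hball t ht l, rfl⟩
  have habarT : abar ≤ T := (hint 0).trans <|
    (intervalIntegral_le_sub_of_mem_Icc hα01 (htmono zero_lt_one).le).trans (hgap 0)
  have hdiam_ge : ∀ t k l, ‖x k t - x l t‖ ≤ diam t := fun t k l =>
    hdiam t ▸ norm_sub_le_iSup_iSup (x · t) k l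
  refine ⟨hC ▸ max_one_sub_exp_mem_Ioo ((hψpos 0 0).trans_le (hK 0 0)) hT hψ0pos habar, ?_⟩
  rintro (_ | n) hn
  · omega
  have ha0 : 0 ≤ tseq n := ht0 ▸ htmono.monotone n.zero_le
  rw [Nat.add_sub_cancel, hdiam (tseq (n + 1))]
  refine ciSup_le fun i => ciSup_le fun j =>
    (norm_sub_le_exp_neg_mul_integral_of_hasDerivAt_hkDrift hαcont (fun t => (hα01 t).1) hcard
      hψ0pos.le (fun t ht => hψ0le t (ha0.trans ht.1)) (fun i t ht => hx i t (ha0.trans ht.1))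
      (htmono n.lt_succ_self).le (hdiam_ge (tseq n)) i j).trans
    (mul_le_mul_of_nonneg_right ?_ ((norm_nonneg _).trans (hdiam_ge _ i₀ i₀)))
  calc exp (-(ψ0 * ∫ t in tseq n..tseq (n + 1), α t)) ≤ exp (-(ψ0 * abar)) :=
        exp_le_exp.2 (neg_le_neg (mul_le_mul_of_nonneg_left (hint n) hψ0pos.le))
    _ ≤ C := hC ▸ exp_neg_mul_le_max_one_sub_exp hψ0pos.le habar.le
        ((hψ0le 0 le_rfl i₀ i₀).trans (hK _ _)) habarT

/-- one-step contraction of the diameter for the undelayed system under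
the persistence condition (WF), with explicit contraction constant
C = max {1 - e^{-KT}, 1 - ψ₀ e^{-KT} ᾱ} independent of N. -/
theorem hk_diameter_contraction
    {dim N : ℕ} (hN : 2 ≤ N)
    (ψ : EuclideanSpace ℝ (Fin dim) → EuclideanSpace ℝ (Fin dim) → ℝ)
    (hψpos : ∀ y z, 0 < ψ y z)
    (hψbdd : ∃ K, ∀ y z, ψ y z ≤ K)
    (hψcont : Continuous fun p : EuclideanSpace ℝ (Fin dim) × EuclideanSpace ℝ (Fin dim) => ψ p.1 p.2)
    (α : ℝ → ℝ) (hαcont : Continuous α) (hα01 : ∀ t, α t ∈ Set.Icc (0:ℝ) 1)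
    (x : Fin N → ℝ → EuclideanSpace ℝ (Fin dim))
    (hode : ∀ i t, 0 ≤ t → HasDerivAt (x i)
      ((α t / ((N : ℝ) - 1)) •
        ∑ j ∈ Finset.univ.filter (fun j => j ≠ i),
          ψ (x i t) (x j t) • (x j t - x i t)) t)
    (T abar : ℝ) (hT : 0 < T) (habar : 0 < abar)
    (tseq : ℕ → ℝ) (ht0 : tseq 0 = 0) (htmono : StrictMono tseq)
    (hgap : ∀ n : ℕ, tseq (n + 1) - tseq n ≤ T)
    (hint : ∀ n : ℕ, abar ≤ ∫ t in (tseq n)..(tseq (n + 1)), α t)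
    (K : ℝ) (hK : ∀ y z, ψ y z ≤ K)
    (M0 : ℝ) (hM0 : M0 = ⨆ i, ‖x i 0‖)
    (ψ0 : ℝ)
    (hψ0 : ψ0 = sInf {r : ℝ | ∃ y z : EuclideanSpace ℝ (Fin dim),
      ‖y‖ ≤ M0 ∧ ‖z‖ ≤ M0 ∧ ψ y z = r})
    (diam : ℝ → ℝ) (hdiam : ∀ t, diam t = ⨆ i, ⨆ j, ‖x i t - x j t‖)
    (C : ℝ)
    (hC : C = max (1 - Real.exp (-K * T)) (1 - ψ0 * Real.exp (-K * T) * abar)) :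
    C ∈ Set.Ioo (0:ℝ) 1 ∧ ∀ n : ℕ, 1 ≤ n → diam (tseq n) ≤ C * diam (tseq (n - 1)) :=
  hk_diameter_contraction_general hN ψ hψpos hψcont α hαcont hα01 x hode T abar hT habar tseq ht0
    htmono hgap hint K hK M0 hM0 ψ0 hψ0 diam hdiam C hC
end

section
/- Let x_1,...,x_N solve the delayed weighted Hegselmann-Krause system dx_i/dt = (α(t)/(N−1)) Σ_{j≠i} ψ(x_i(t), x_j(t−τ)) (x_j(t−τ) − x_i(t)) for t > 0 with continuous initial data on [−τ,0], τ > 0. Then for every v ∈ ℝ^d, every S ≥ 0, every t ≥ S − τ and every i, one has min_j min_{s∈[S−τ,S]} ⟨x_j(s),v⟩ ≤ ⟨x_i(t),v⟩ ≤ max_j max_{s∈[S−τ,S]} ⟨x_j(s),v⟩. -/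
/-!
Fix a direction `v`. The projections `⟪x_i, v⟫` satisfy a delayed differential inequality: at a
time `t > 0` where `⟪x_i(t), v⟫` exceeds a level `M` that bounds every `⟪x_j(t - τ), v⟫`, the
velocity of `x_i` is a nonnegative combination of the vectors `x_j(t - τ) - x_i(t)`, all pointing
into the half-space `⟪·, v⟫ < ⟪x_i(t), v⟫`, so `⟪x_i, v⟫` is not increasing. A barrier argument
then propagates a bound from one window of length `τ` to the next (the method of steps). The lower
bound is the upper bound for `-v`.
-/

open Set
open scoped RealInnerProductSpace

theorem image_le_of_hasDerivAt_nonpos_above {g : ℝ → ℝ} {a b M : ℝ}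
    (hc : ContinuousOn g (Icc a b))
    (hg : ∀ t ∈ Ioo a b, M < g t → ∃ g', HasDerivAt g g' t ∧ g' ≤ 0)
    (ha : g a ≤ M) : ∀ t ∈ Icc a b, g t ≤ M := by
  intro t ht
  by_contra! hMt
  set E := Icc a t ∩ g ⁻¹' Iic M
  have hE : IsCompact E := isCompact_Icc.of_isClosed_subset
    ((hc.mono (Icc_subset_Icc_right ht.2)).preimage_isClosed_of_isClosed isClosed_Icc isClosed_Iic)
    inter_subset_left
  -- `u` is the last time before `t` at which `g` is at most `M`.
  have huE : sSup E ∈ E := hE.sSup_mem ⟨a, ⟨le_rfl, ht.1⟩, ha⟩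
  set u := sSup E
  have hut : u < t := huE.1.2.lt_of_ne fun h => (h ▸ hMt).not_ge huE.2
  have hM_lt : ∀ s ∈ Ioo u t, M < g s := fun s hs => by
    by_contra! hs'
    exact (le_csSup hE.bddAbove ⟨⟨huE.1.1.trans hs.1.le, hs.2.le⟩, hs'⟩).not_gt hs.1
  have hderiv : ∀ s ∈ interior (Icc u t), ∃ g', HasDerivAt g g' s ∧ g' ≤ 0 := fun s hs => by
    rw [interior_Icc] at hs
    exact hg s ⟨huE.1.1.trans_lt hs.1, hs.2.trans_le ht.2⟩ (hM_lt s hs)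
  have hanti : AntitoneOn g (Icc u t) :=
    antitoneOn_of_deriv_nonpos (convex_Icc u t) (hc.mono (Icc_subset_Icc huE.1.1 ht.2))
      (fun s hs => (hderiv s hs).choose_spec.1.differentiableAt.differentiableWithinAt)
      (fun s hs => (hderiv s hs).choose_spec.1.deriv ▸ (hderiv s hs).choose_spec.2)
  exact (hanti (left_mem_Icc.2 hut.le) (right_mem_Icc.2 hut.le) hut.le).trans huE.2 |>.not_gt hMt

section DelayedComparison

variable {ι : Type*} {f : ι → ℝ → ℝ} {τ S M : ℝ}
  (hcont : ∀ i, ContinuousOn (f i) (Ici S))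
  (hderiv : ∀ i t, S < t → M < f i t → (∀ j, f j (t - τ) ≤ M) →
    ∃ f', HasDerivAt (f i) f' t ∧ f' ≤ 0)
include hcont hderiv

theorem delayed_le_on_Icc_add (hτ : 0 ≤ τ) {T : ℝ} (hST : S ≤ T)
    (hT : ∀ j, ∀ s ∈ Icc (S - τ) T, f j s ≤ M) :
    ∀ j, ∀ s ∈ Icc (S - τ) (T + τ), f j s ≤ M := by
  intro i t ht
  rcases le_or_gt t T with htT | hTt
  · exact hT i t ⟨ht.1, htT⟩
  refine image_le_of_hasDerivAt_nonpos_above (a := T) ((hcont i).mono fun s hs => ?_)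
    (fun s hs hMs => hderiv i s (by linarith [hs.1]) hMs fun j => hT j (s - τ) ?_)
    (hT i T ⟨by linarith [ht.1], le_rfl⟩) t ⟨hTt.le, le_rfl⟩
  · exact mem_Ici.2 (hST.trans hs.1)
  · exact ⟨by linarith [hs.1], by linarith [hs.2, ht.2]⟩

theorem delayed_le_of_le_on_Icc (hτ : 0 < τ) (hinit : ∀ j, ∀ s ∈ Icc (S - τ) S, f j s ≤ M)
    (i : ι) {t : ℝ} (ht : S - τ ≤ t) : f i t ≤ M := by
  have hsteps : ∀ n : ℕ, ∀ j, ∀ s ∈ Icc (S - τ) (S + n * τ), f j s ≤ M := by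
    intro n
    induction n with
    | zero => simpa using hinit
    | succ n ih =>
      simpa [add_mul, add_assoc] using
        delayed_le_on_Icc_add hcont hderiv hτ.le (le_add_of_nonneg_right (by positivity)) ih
  obtain ⟨n, hn⟩ := exists_nat_ge ((t - S) / τ)
  rw [div_le_iff₀ hτ] at hn
  exact hsteps n i t ⟨ht, by linarith⟩

end DelayedComparison

theorem inner_smul_sum_smul_sub_nonpos {E ι : Type*} [NormedAddCommGroup E]
    [InnerProductSpace ℝ E] (s : Finset ι) {c : ℝ} (hc : 0 ≤ c) {w : ι → ℝ}
    (hw : ∀ j ∈ s, 0 ≤ w j) {y : ι → E} {z v : E} (hy : ∀ j ∈ s, ⟪y j, v⟫ ≤ ⟪z, v⟫) :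
    ⟪c • ∑ j ∈ s, w j • (y j - z), v⟫ ≤ 0 := by
  rw [real_inner_smul_left, sum_inner]
  refine mul_nonpos_of_nonneg_of_nonpos hc (Finset.sum_nonpos fun j hj => ?_)
  rw [real_inner_smul_left, inner_sub_left]
  exact mul_nonpos_of_nonneg_of_nonpos (hw j hj) (sub_nonpos.2 (hy j hj))

theorem hk_delay_projection_bounds_general
    {dim N : ℕ} (τ : ℝ) (hτ : 0 < τ)
    (ψ : EuclideanSpace ℝ (Fin dim) → EuclideanSpace ℝ (Fin dim) → ℝ)
    (hψpos : ∀ y z, 0 < ψ y z)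
    (α : ℝ → ℝ) (hα01 : ∀ t, α t ∈ Set.Icc (0:ℝ) 1)
    (x : Fin N → ℝ → EuclideanSpace ℝ (Fin dim))
    (hxcont : ∀ i, ContinuousOn (x i) (Set.Ici (-τ)))
    (hode : ∀ i t, 0 < t → HasDerivAt (x i)
      ((α t / ((N : ℝ) - 1)) •
        ∑ j ∈ Finset.univ.filter (fun j => j ≠ i),
          ψ (x i t) (x j (t - τ)) • (x j (t - τ) - x i t)) t)
    (v : EuclideanSpace ℝ (Fin dim)) (S t : ℝ) (hS : 0 ≤ S) (ht : S - τ ≤ t) (i : Fin N) :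
    (⨅ j, ⨅ s : Set.Icc (S - τ) S, ⟪x j (s : ℝ), v⟫) ≤ ⟪x i t, v⟫ ∧
      ⟪x i t, v⟫ ≤ ⨆ j, ⨆ s : Set.Icc (S - τ) S, ⟪x j (s : ℝ), v⟫ := by
  have hcoef : ∀ s, 0 ≤ α s / ((N : ℝ) - 1) := fun s =>
    div_nonneg (hα01 s).1 (sub_nonneg.2 (Nat.one_le_cast.2 i.pos))
  have hcont : ∀ w j, ContinuousOn (fun s => ⟪x j s, w⟫) (Ici (-τ)) := fun w j =>
    (hxcont j).inner continuousOn_const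
  have hproj : ∀ w M, (∀ j, ∀ s ∈ Icc (S - τ) S, ⟪x j s, w⟫ ≤ M) → ⟪x i t, w⟫ ≤ M := by
    intro w M hinit
    refine delayed_le_of_le_on_Icc (fun j => (hcont w j).mono (Ici_subset_Ici.2 (by linarith)))
      (fun j s hSs hMs hprev => ?_) hτ hinit i ht
    refine ⟨_, (hode j s (by linarith)).inner ℝ (hasDerivAt_const s w), ?_⟩
    rw [inner_zero_right, zero_add]
    exact inner_smul_sum_smul_sub_nonpos _ (hcoef s) (fun k _ => (hψpos _ _).le)
      fun k _ => (hprev k).trans hMs.le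
  have hwindow : ∀ w j, IsCompact (range fun s : Icc (S - τ) S => ⟪x j s, w⟫) := fun w j =>
    isCompact_range (ContinuousOn.domRestrict (s := Icc (S - τ) S)
      ((hcont w j).mono fun s hs => mem_Ici.2 (by linarith [hs.1])))
  constructor
  · have h := hproj (-v) (-⨅ j, ⨅ s : Icc (S - τ) S, ⟪x j s, v⟫) fun j s hs => by
      rw [inner_neg_right, neg_le_neg_iff]
      exact (ciInf_le (finite_range fun j => ⨅ s : Icc (S - τ) S, ⟪x j s, v⟫).bddBelow j).trans
        (ciInf_le (hwindow v j).bddBelow ⟨s, hs⟩)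
    rwa [inner_neg_right, neg_le_neg_iff] at h
  · exact hproj v _ fun j s hs => (le_ciSup (hwindow v j).bddAbove ⟨s, hs⟩).trans
      (le_ciSup (finite_range fun j => ⨆ s : Icc (S - τ) S, ⟪x j s, v⟫).bddAbove j)

/-- projection bounds for the delayed weighted Hegselmann-Krause system:
for t ≥ S - τ the projections stay between the min and max over [S-τ, S]. -/
theorem hk_delay_projection_bounds
    {dim N : ℕ} (hN : 2 ≤ N) (τ : ℝ) (hτ : 0 < τ)
    (ψ : EuclideanSpace ℝ (Fin dim) → EuclideanSpace ℝ (Fin dim) → ℝ)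
    (hψpos : ∀ y z, 0 < ψ y z)
    (hψbdd : ∃ K, ∀ y z, ψ y z ≤ K)
    (hψcont : Continuous fun p : EuclideanSpace ℝ (Fin dim) × EuclideanSpace ℝ (Fin dim) => ψ p.1 p.2)
    (α : ℝ → ℝ) (hαcont : Continuous α) (hα01 : ∀ t, α t ∈ Set.Icc (0:ℝ) 1)
    (x : Fin N → ℝ → EuclideanSpace ℝ (Fin dim))
    (hxcont : ∀ i, ContinuousOn (x i) (Set.Ici (-τ)))
    (hode : ∀ i t, 0 < t → HasDerivAt (x i)
      ((α t / ((N : ℝ) - 1)) •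
        ∑ j ∈ Finset.univ.filter (fun j => j ≠ i),
          ψ (x i t) (x j (t - τ)) • (x j (t - τ) - x i t)) t)
    (v : EuclideanSpace ℝ (Fin dim)) (S t : ℝ) (hS : 0 ≤ S) (ht : S - τ ≤ t) (i : Fin N) :
    (⨅ j, ⨅ s : Set.Icc (S - τ) S, ⟪x j (s : ℝ), v⟫) ≤ ⟪x i t, v⟫ ∧
      ⟪x i t, v⟫ ≤ ⨆ j, ⨆ s : Set.Icc (S - τ) S, ⟪x j (s : ℝ), v⟫ :=
  hk_delay_projection_bounds_general τ hτ ψ hψpos α hα01 x hxcont hode v S t hS ht i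
end

section
/- For solutions of the delayed weighted Hegselmann-Krause system, define D_n := max_{i,j} max_{s,t ∈ [t_n−τ, t_n]} |x_i(s) − x_j(t)| for an increasing sequence of times t_n with t_0 = 0. Then for all n, all indices i, j, and all s, t ≥ t_n − τ, one has |x_i(s) − x_j(t)| ≤ D_n; in particular D_{n+1} ≤ D_n for all n. -/
/-!
Let `C` be the closed convex hull of all states on the window `[tₙ - τ, tₙ]`. Each velocity
`xᵢ'(t)` is a nonnegative combination of the vectors `xⱼ(t - τ) - xᵢ(t)`. So while the delayed
states lie in `C`, a continuous functional `f` separating a point from `C` at level `u` cannot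
increase along `xᵢ` once `f (xᵢ t) > u`, hence `xᵢ` never leaves `C`. Stepping forward by `τ`
keeps every state after `tₙ - τ` in `C`, and `C` has the same diameter as the window, which is
`Dₙ`.
-/

open Set Metric

theorem nonpos_of_hasDerivAt_nonpos_of_pos {g g' : ℝ → ℝ} {a b : ℝ}
    (hg : ContinuousOn g (Icc a b)) (hg' : ∀ t ∈ Ioo a b, HasDerivAt g (g' t) t)
    (ha : g a ≤ 0) (hpos : ∀ t ∈ Ioo a b, 0 < g t → g' t ≤ 0) :
    ∀ t ∈ Icc a b, g t ≤ 0 := by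
  intro t ht
  by_contra! hgt
  -- `c` is the last zero-or-below time before `t`; after it `g > 0`, so `g` decreases.
  set Z := Icc a t ∩ g ⁻¹' Iic 0
  have hZbdd : BddAbove Z := bddAbove_Icc.mono inter_subset_left
  have hcZ : sSup Z ∈ Z :=
    ((hg.mono (Icc_subset_Icc_right ht.2)).preimage_isClosed_of_isClosed isClosed_Icc
      isClosed_Iic).csSup_mem ⟨a, ⟨le_rfl, ht.1⟩, ha⟩ hZbdd
  set c := sSup Z
  have hct : c < t := hcZ.1.2.lt_of_ne fun h => (h ▸ hgt).not_ge hcZ.2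
  have hsub : Icc c t ⊆ Icc a b := Icc_subset_Icc hcZ.1.1 ht.2
  have hanti : AntitoneOn g (Icc c t) := by
    refine antitoneOn_of_hasDerivWithinAt_nonpos (convex_Icc c t) (hg.mono hsub)
      (fun s hs => ?_) (fun s hs => ?_) (f' := g') <;> rw [interior_Icc] at hs
    · exact (hg' s (Ioo_subset_Ioo hcZ.1.1 ht.2 hs)).hasDerivWithinAt
    · refine hpos s (Ioo_subset_Ioo hcZ.1.1 ht.2 hs) (not_le.1 fun hs0 => ?_)
      exact hs.1.not_ge (le_csSup hZbdd ⟨⟨hcZ.1.1.trans hs.1.le, hs.2.le⟩, hs0⟩)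
  exact hgt.not_ge ((hanti ⟨le_rfl, hct.le⟩ ⟨hct.le, le_rfl⟩ hct.le).trans hcZ.2)

theorem Convex.mem_of_hasDerivAt_sum_smul_sub {E ι : Type*} [NormedAddCommGroup E]
    [NormedSpace ℝ E] {C : Set E} (hC : Convex ℝ C) (hCc : IsClosed C) {J : Finset ι}
    {y : ℝ → E} {z : ι → ℝ → E} {c : ι → ℝ → ℝ} {a b : ℝ} (hy : ContinuousOn y (Icc a b))
    (hderiv : ∀ s ∈ Ioo a b, HasDerivAt y (∑ j ∈ J, c j s • (z j s - y s)) s)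
    (hc : ∀ j ∈ J, ∀ s ∈ Ioo a b, 0 ≤ c j s) (hz : ∀ j ∈ J, ∀ s ∈ Ioo a b, z j s ∈ C)
    (ha : y a ∈ C) : ∀ t ∈ Icc a b, y t ∈ C := by
  intro t ht
  by_contra hyt
  obtain ⟨f, u, hfC, hfu⟩ := geometric_hahn_banach_closed_point hC hCc hyt
  have hfy : ∀ s ∈ Icc a b, f (y s) - u ≤ 0 := by
    refine nonpos_of_hasDerivAt_nonpos_of_pos ((f.continuous.comp_continuousOn hy).sub
      continuousOn_const) (fun s hs => ?_) (by linarith [hfC _ ha]) (fun s hs hpos => ?_)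
      (g' := fun s => ∑ j ∈ J, c j s * (f (z j s) - f (y s)))
    · simpa [map_sum, map_smul, map_sub, smul_eq_mul] using
        (f.hasFDerivAt.comp_hasDerivAt s (hderiv s hs)).sub_const u
    · exact Finset.sum_nonpos fun j hj => mul_nonpos_of_nonneg_of_nonpos (hc j hj s hs)
        (by linarith [hfC _ (hz j hj s hs)])
  linarith [hfy t ht]

theorem dist_le_of_mem_closure_convexHull {E : Type*} [NormedAddCommGroup E] [NormedSpace ℝ E]
    {S : Set E} {d : ℝ} {p q : E} (hS : ∀ y ∈ S, ∀ z ∈ S, dist y z ≤ d)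
    (hp : p ∈ closure (convexHull ℝ S)) (hq : q ∈ closure (convexHull ℝ S)) :
    dist p q ≤ d := by
  obtain ⟨y, hy⟩ : S.Nonempty := convexHull_nonempty_iff.1 (closure_nonempty_iff.1 ⟨p, hp⟩)
  calc dist p q ≤ diam (closure (convexHull ℝ S)) :=
        dist_le_diam_of_mem (isBounded_convexHull.2 (isBounded_iff.2 ⟨d, hS⟩)).closure hp hq
    _ = diam S := by rw [diam_closure, convexHull_diam]
    _ ≤ d := diam_le_of_forall_dist_le (dist_nonneg.trans (hS y hy y hy)) hS

section windowDiam

variable {ι E : Type*} [SeminormedAddCommGroup E] {x : ι → ℝ → E} {a b d : ℝ}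

noncomputable def windowDiam (x : ι → ℝ → E) (a b : ℝ) : ℝ :=
  ⨆ i, ⨆ j, ⨆ s : Icc a b, ⨆ t : Icc a b, ‖x i s - x j t‖

theorem windowDiam_nonneg : 0 ≤ windowDiam x a b :=
  Real.iSup_nonneg fun _ => Real.iSup_nonneg fun _ => Real.iSup_nonneg fun _ =>
    Real.iSup_nonneg fun _ => norm_nonneg _

theorem windowDiam_le (hd : 0 ≤ d)
    (h : ∀ i j, ∀ s ∈ Icc a b, ∀ t ∈ Icc a b, ‖x i s - x j t‖ ≤ d) : windowDiam x a b ≤ d :=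
  Real.iSup_le (fun i => Real.iSup_le (fun j => Real.iSup_le (fun s => Real.iSup_le
    (fun t => h i j s s.2 t t.2) hd) hd) hd) hd

theorem norm_sub_le_windowDiam [Finite ι] (hx : ∀ i, ContinuousOn (x i) (Icc a b)) {i j : ι}
    {s t : ℝ} (hs : s ∈ Icc a b) (ht : t ∈ Icc a b) : ‖x i s - x j t‖ ≤ windowDiam x a b := by
  obtain ⟨R, hR⟩ := isBounded_iff.1
    (isCompact_iUnion fun k => isCompact_Icc.image_of_continuousOn (hx k)).isBounded
  have hbound : ∀ i j, ∀ s : Icc a b, ∀ t : Icc a b, ‖x i s - x j t‖ ≤ R := fun i j s t =>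
    (dist_eq_norm _ _).symm.trans_le (hR (mem_iUnion_of_mem i (mem_image_of_mem _ s.2))
      (mem_iUnion_of_mem j (mem_image_of_mem _ t.2)))
  have hR0 : 0 ≤ R := (norm_nonneg _).trans (hbound i j ⟨s, hs⟩ ⟨t, ht⟩)
  have bdd_t : ∀ i j, ∀ s : Icc a b, ⨆ t : Icc a b, ‖x i s - x j t‖ ≤ R := fun i j s =>
    Real.iSup_le (hbound i j s) hR0
  have bdd_st : ∀ i j, ⨆ s : Icc a b, ⨆ t : Icc a b, ‖x i s - x j t‖ ≤ R := fun i j =>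
    Real.iSup_le (bdd_t i j) hR0
  have bdd_jst : ∀ i, ⨆ j, ⨆ s : Icc a b, ⨆ t : Icc a b, ‖x i s - x j t‖ ≤ R := fun i =>
    Real.iSup_le (bdd_st i) hR0
  exact le_ciSup_of_le ⟨R, forall_mem_range.2 bdd_jst⟩ i <|
    le_ciSup_of_le ⟨R, forall_mem_range.2 (bdd_st i)⟩ j <|
    le_ciSup_of_le ⟨R, forall_mem_range.2 (bdd_t i j)⟩ ⟨s, hs⟩ <|
    le_ciSup ⟨R, forall_mem_range.2 (hbound i j ⟨s, hs⟩)⟩ ⟨t, ht⟩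

end windowDiam

section DelayedHK

variable {E : Type*} [NormedAddCommGroup E] [NormedSpace ℝ E] {N : ℕ} {τ : ℝ} {ψ : E → E → ℝ}
  {α : ℝ → ℝ} {x : Fin N → ℝ → E}

theorem hk_mem_of_mem_window (hτ : 0 < τ) (hψ : ∀ y z, 0 ≤ ψ y z) (hα : ∀ t, 0 ≤ α t)
    (hxcont : ∀ i, ContinuousOn (x i) (Ici (-τ)))
    (hode : ∀ i t, 0 < t → HasDerivAt (x i)
      ((α t / ((N : ℝ) - 1)) •
        ∑ j ∈ Finset.univ.filter (fun j => j ≠ i),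
          ψ (x i t) (x j (t - τ)) • (x j (t - τ) - x i t)) t)
    {C : Set E} (hC : Convex ℝ C) (hCc : IsClosed C) {b : ℝ} (hb : 0 ≤ b)
    (hwin : ∀ j, ∀ s ∈ Icc (b - τ) b, x j s ∈ C) (i : Fin N) {t : ℝ} (ht : b - τ ≤ t) :
    x i t ∈ C := by
  have hsteps : ∀ k : ℕ, ∀ l, ∀ r ∈ Icc (b - τ) (b + k * τ), x l r ∈ C := by
    intro k
    induction k with
    | zero => simpa using hwin
    | succ k ih =>
      intro l r hr
      rcases le_or_gt r (b + k * τ) with hrk | hrk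
      · exact ih l r ⟨hr.1, hrk⟩
      have hkτ : 0 ≤ k * τ := by positivity
      have hrk' : r ≤ b + k * τ + τ := by push_cast at hr; linarith [hr.2]
      have hN : (0 : ℝ) ≤ N - 1 := sub_nonneg.2 (Nat.one_le_cast.2 l.pos)
      refine hC.mem_of_hasDerivAt_sum_smul_sub hCc (J := Finset.univ.filter (· ≠ l))
        (z := fun j s => x j (s - τ)) (c := fun j s => α s / (N - 1) * ψ (x l s) (x j (s - τ)))
        ((hxcont l).mono fun q hq => ?_) (fun s hs => ?_)
        (fun j _ s _ => mul_nonneg (div_nonneg (hα s) hN) (hψ _ _))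
        (fun j _ s hs => ih j _ ⟨?_, ?_⟩) (ih l _ ⟨by linarith, le_rfl⟩) r ⟨hrk.le, le_rfl⟩
      · exact mem_Ici.2 (by linarith [hq.1])
      · simpa only [Finset.smul_sum, smul_smul] using hode l s (by linarith [hs.1])
      · linarith [hs.1]
      · linarith [hs.2]
  obtain ⟨k, hk⟩ := exists_nat_ge ((t - b) / τ)
  exact hsteps k i t ⟨ht, by linarith [(div_le_iff₀ hτ).1 hk]⟩

theorem hk_norm_sub_le_windowDiam (hτ : 0 < τ) (hψ : ∀ y z, 0 ≤ ψ y z) (hα : ∀ t, 0 ≤ α t)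
    (hxcont : ∀ i, ContinuousOn (x i) (Ici (-τ)))
    (hode : ∀ i t, 0 < t → HasDerivAt (x i)
      ((α t / ((N : ℝ) - 1)) •
        ∑ j ∈ Finset.univ.filter (fun j => j ≠ i),
          ψ (x i t) (x j (t - τ)) • (x j (t - τ) - x i t)) t)
    {b : ℝ} (hb : 0 ≤ b) (i j : Fin N) {s t : ℝ} (hs : b - τ ≤ s) (ht : b - τ ≤ t) :
    ‖x i s - x j t‖ ≤ windowDiam x (b - τ) b := by
  set S := ⋃ k, x k '' Icc (b - τ) b
  have hmem : ∀ k r, b - τ ≤ r → x k r ∈ closure (convexHull ℝ S) := fun k r hr =>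
    hk_mem_of_mem_window hτ hψ hα hxcont hode (convex_convexHull ℝ S).closure isClosed_closure hb
      (fun l r' hr' => subset_closure (subset_convexHull ℝ S
        (mem_iUnion_of_mem l (mem_image_of_mem _ hr')))) k hr
  rw [← dist_eq_norm]
  refine dist_le_of_mem_closure_convexHull ?_ (hmem i s hs) (hmem j t ht)
  simp only [S, mem_iUnion, mem_image]
  rintro _ ⟨k, r, hr, rfl⟩ _ ⟨l, r', hr', rfl⟩
  rw [dist_eq_norm]
  exact norm_sub_le_windowDiam
    (fun k => (hxcont k).mono fun q hq => mem_Ici.2 (by linarith [hq.1])) hr hr'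

end DelayedHK

theorem hk_delay_diameter_bound_general
    {dim N : ℕ} (τ : ℝ) (hτ : 0 < τ)
    (ψ : EuclideanSpace ℝ (Fin dim) → EuclideanSpace ℝ (Fin dim) → ℝ)
    (hψpos : ∀ y z, 0 < ψ y z)
    (α : ℝ → ℝ) (hα01 : ∀ t, α t ∈ Set.Icc (0:ℝ) 1)
    (x : Fin N → ℝ → EuclideanSpace ℝ (Fin dim))
    (hxcont : ∀ i, ContinuousOn (x i) (Set.Ici (-τ)))
    (hode : ∀ i t, 0 < t → HasDerivAt (x i)
      ((α t / ((N : ℝ) - 1)) •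
        ∑ j ∈ Finset.univ.filter (fun j => j ≠ i),
          ψ (x i t) (x j (t - τ)) • (x j (t - τ) - x i t)) t)
    (tseq : ℕ → ℝ) (ht0 : tseq 0 = 0) (htmono : StrictMono tseq)
    (D : ℕ → ℝ)
    (hD : ∀ n, D n = ⨆ i, ⨆ j, ⨆ s : Set.Icc (tseq n - τ) (tseq n),
      ⨆ t : Set.Icc (tseq n - τ) (tseq n), ‖x i (s : ℝ) - x j (t : ℝ)‖)
    :
    (∀ (n : ℕ) (i j : Fin N) (s t : ℝ), tseq n - τ ≤ s → tseq n - τ ≤ t →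
      ‖x i s - x j t‖ ≤ D n) ∧ ∀ n : ℕ, D (n + 1) ≤ D n := by
  have hbound : ∀ (n : ℕ) (i j : Fin N) (s t : ℝ), tseq n - τ ≤ s → tseq n - τ ≤ t →
      ‖x i s - x j t‖ ≤ D n := fun n i j s t hs ht => by
    rw [hD n]
    exact hk_norm_sub_le_windowDiam hτ (fun y z => (hψpos y z).le) (fun t => (hα01 t).1) hxcont
      hode (ht0 ▸ htmono.monotone n.zero_le) i j hs ht
  refine ⟨hbound, fun n => ?_⟩
  have hn : tseq n ≤ tseq (n + 1) := htmono.monotone n.le_succ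
  rw [hD (n + 1)]
  exact windowDiam_le (hD n ▸ windowDiam_nonneg) fun i j s hs t ht =>
    hbound n i j s t (by linarith [hs.1]) (by linarith [ht.1])

/-- for the delayed system, the delayed diameter Dₙ bounds all pairwise
distances at times ≥ tₙ - τ; in particular (Dₙ) is nonincreasing. -/
theorem hk_delay_diameter_bound
    {dim N : ℕ} (hN : 2 ≤ N) (τ : ℝ) (hτ : 0 < τ)
    (ψ : EuclideanSpace ℝ (Fin dim) → EuclideanSpace ℝ (Fin dim) → ℝ)
    (hψpos : ∀ y z, 0 < ψ y z)
    (hψbdd : ∃ K, ∀ y z, ψ y z ≤ K)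
    (hψcont : Continuous fun p : EuclideanSpace ℝ (Fin dim) × EuclideanSpace ℝ (Fin dim) => ψ p.1 p.2)
    (α : ℝ → ℝ) (hαcont : Continuous α) (hα01 : ∀ t, α t ∈ Set.Icc (0:ℝ) 1)
    (x : Fin N → ℝ → EuclideanSpace ℝ (Fin dim))
    (hxcont : ∀ i, ContinuousOn (x i) (Set.Ici (-τ)))
    (hode : ∀ i t, 0 < t → HasDerivAt (x i)
      ((α t / ((N : ℝ) - 1)) •
        ∑ j ∈ Finset.univ.filter (fun j => j ≠ i),
          ψ (x i t) (x j (t - τ)) • (x j (t - τ) - x i t)) t)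
    (tseq : ℕ → ℝ) (ht0 : tseq 0 = 0) (htmono : StrictMono tseq)
    (D : ℕ → ℝ)
    (hD : ∀ n, D n = ⨆ i, ⨆ j, ⨆ s : Set.Icc (tseq n - τ) (tseq n),
      ⨆ t : Set.Icc (tseq n - τ) (tseq n), ‖x i (s : ℝ) - x j (t : ℝ)‖)
    :
    (∀ (n : ℕ) (i j : Fin N) (s t : ℝ), tseq n - τ ≤ s → tseq n - τ ≤ t →
      ‖x i s - x j t‖ ≤ D n) ∧ ∀ n : ℕ, D (n + 1) ≤ D n :=
  hk_delay_diameter_bound_general τ hτ ψ hψpos α hα01 x hxcont hode tseq ht0 htmono D hD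
end

section
/- For solutions of the delayed weighted Hegselmann-Krause system, for all i and all t ≥ −τ one has |x_i(t)| ≤ M̃^0, where M̃^0 := max_i max_{s ∈ [−τ,0]} |x_i(s)|. -/
/-!
Method of steps. As long as every state has norm at most `M0` up to time `a ≥ 0`, on the next
window `[a, a + τ]` all delayed states `x j (t - τ)` lie in the closed ball of radius `M0`. Each
summand `ψ • (x j (t - τ) - x i t)` then has nonpositive inner product with `x i t` as soon as
`‖x i t‖ ≥ M0`, so `‖x i t‖²` cannot increase above `M0²` and the ball stays invariant on the
window. Induction on the windows gives the bound for all `t ≥ -τ`.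
-/

open Set
open scoped RealInnerProductSpace

theorem image_le_of_deriv_nonpos_above {g g' : ℝ → ℝ} {a b c : ℝ}
    (hg : ContinuousOn g (Icc a b)) (hg' : ∀ t ∈ Ioo a b, HasDerivAt g (g' t) t)
    (hdec : ∀ t ∈ Ioo a b, c < g t → g' t ≤ 0) (ha : g a ≤ c) :
    ∀ t ∈ Icc a b, g t ≤ c := by
  intro t ht
  by_contra! hct
  -- `s₀` is the last time before `t` with `g s₀ ≤ c`; after it `g > c`, so `g` decreases
  have hclosed : IsClosed (Icc a t ∩ g ⁻¹' Iic c) :=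
    (hg.mono (Icc_subset_Icc_right ht.2)).preimage_isClosed_of_isClosed isClosed_Icc isClosed_Iic
  obtain ⟨s₀, ⟨⟨has₀, hs₀t⟩, hgs₀⟩, hlast⟩ :=
    (isCompact_Icc.of_isClosed_subset hclosed inter_subset_left).exists_isGreatest
      ⟨a, ⟨le_rfl, ht.1⟩, ha⟩
  have hanti : AntitoneOn g (Icc s₀ t) := by
    refine antitoneOn_of_hasDerivWithinAt_nonpos (convex_Icc s₀ t)
      (hg.mono (Icc_subset_Icc has₀ ht.2)) (f' := g') ?_ ?_ <;>
      rw [interior_Icc] <;> intro u hu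
    · exact (hg' u ⟨has₀.trans_lt hu.1, hu.2.trans_le ht.2⟩).hasDerivWithinAt
    · refine hdec u ⟨has₀.trans_lt hu.1, hu.2.trans_le ht.2⟩ (not_le.1 fun hgu => ?_)
      exact hu.1.not_ge (hlast ⟨⟨has₀.trans hu.1.le, hu.2.le⟩, hgu⟩)
  have := hanti ⟨le_rfl, hs₀t⟩ ⟨hs₀t, le_rfl⟩ hs₀t
  exact hct.not_ge (this.trans hgs₀)

theorem norm_le_of_inner_deriv_nonpos {E : Type*} [NormedAddCommGroup E] [InnerProductSpace ℝ E]
    {f f' : ℝ → E} {a b R : ℝ} (hf : ContinuousOn f (Icc a b))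
    (hf' : ∀ t ∈ Ioo a b, HasDerivAt f (f' t) t)
    (hinward : ∀ t ∈ Ioo a b, R < ‖f t‖ → ⟪f t, f' t⟫ ≤ 0) (ha : ‖f a‖ ≤ R) :
    ∀ t ∈ Icc a b, ‖f t‖ ≤ R := by
  have hR : 0 ≤ R := (norm_nonneg _).trans ha
  have hsq := image_le_of_deriv_nonpos_above (c := R ^ 2) (hf.norm.pow 2)
    (fun t ht => (hf' t ht).norm_sq) (fun t ht hlt => by
      have := hinward t ht (lt_of_pow_lt_pow_left₀ 2 (norm_nonneg _) hlt)
      linarith) (pow_le_pow_left₀ (norm_nonneg _) ha 2)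
  exact fun t ht => (pow_le_pow_iff_left₀ (norm_nonneg _) hR two_ne_zero).1 (hsq t ht)

theorem real_inner_sub_self_nonpos {E : Type*} [NormedAddCommGroup E] [InnerProductSpace ℝ E]
    {y z : E} (h : ‖z‖ ≤ ‖y‖) : ⟪y, z - y⟫ ≤ 0 := by
  rw [inner_sub_right, real_inner_self_eq_norm_sq]
  nlinarith [real_inner_le_norm y z, norm_nonneg y]

theorem real_inner_sum_smul_sub_self_nonpos {E ι : Type*} [NormedAddCommGroup E]
    [InnerProductSpace ℝ E] (s : Finset ι) {w : ι → ℝ} {z : ι → E} {y : E}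
    (hw : ∀ j ∈ s, 0 ≤ w j) (hz : ∀ j ∈ s, ‖z j‖ ≤ ‖y‖) :
    ⟪y, ∑ j ∈ s, w j • (z j - y)⟫ ≤ 0 := by
  rw [inner_sum]
  exact Finset.sum_nonpos fun j hj => by
    rw [real_inner_smul_right]
    exact mul_nonpos_of_nonneg_of_nonpos (hw j hj) (real_inner_sub_self_nonpos (hz j hj))

theorem norm_le_iSup_iSup_norm {ι E : Type*} [Finite ι] [NormedAddCommGroup E]
    {K : Set ℝ} (hK : IsCompact K) {f : ι → ℝ → E} (hf : ∀ i, ContinuousOn (f i) K)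
    (i : ι) {s : ℝ} (hs : s ∈ K) : ‖f i s‖ ≤ ⨆ i, ⨆ s : K, ‖f i s‖ := by
  have hbdd : BddAbove (range fun s : K => ‖f i s‖) := by
    rw [range_comp' (fun s => ‖f i s‖), Subtype.range_coe]
    exact (hK.image_of_continuousOn (hf i).norm).bddAbove
  exact (le_ciSup hbdd ⟨s, hs⟩).trans
    (le_ciSup (f := fun i => ⨆ s : K, ‖f i s‖) (finite_range _).bddAbove i)

theorem forall_of_forall_window_step {τ : ℝ} (hτ : 0 < τ) {P : ℝ → Prop}
    (h₀ : ∀ s ∈ Icc (-τ) 0, P s)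
    (hstep : ∀ a, 0 ≤ a → (∀ s ∈ Icc (-τ) a, P s) → ∀ s ∈ Icc a (a + τ), P s) :
    ∀ t, -τ ≤ t → P t := by
  have hwin : ∀ n : ℕ, ∀ s ∈ Icc (-τ) (n * τ), P s := by
    intro n
    induction n with
    | zero => simpa using h₀
    | succ n ih =>
      intro s ⟨hs₁, hs₂⟩
      rcases le_or_gt s (n * τ) with hs | hs
      · exact ih s ⟨hs₁, hs⟩
      · exact hstep _ (by positivity) ih s ⟨hs.le, by push_cast at hs₂; linarith⟩
  intro t ht
  obtain ⟨n, hn⟩ := exists_nat_ge (t / τ)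
  exact hwin n t ⟨ht, (div_le_iff₀ hτ).1 hn⟩

theorem hk_delay_uniform_bound_general
    {dim N : ℕ} (hN : 2 ≤ N) (τ : ℝ) (hτ : 0 < τ)
    (ψ : EuclideanSpace ℝ (Fin dim) → EuclideanSpace ℝ (Fin dim) → ℝ)
    (hψpos : ∀ y z, 0 < ψ y z)
    (α : ℝ → ℝ) (hα01 : ∀ t, α t ∈ Set.Icc (0:ℝ) 1)
    (x : Fin N → ℝ → EuclideanSpace ℝ (Fin dim))
    (hxcont : ∀ i, ContinuousOn (x i) (Set.Ici (-τ)))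
    (hode : ∀ i t, 0 < t → HasDerivAt (x i)
      ((α t / ((N : ℝ) - 1)) •
        ∑ j ∈ Finset.univ.filter (fun j => j ≠ i),
          ψ (x i t) (x j (t - τ)) • (x j (t - τ) - x i t)) t)
    (M0 : ℝ) (hM0 : M0 = ⨆ i, ⨆ s : Set.Icc (-τ) (0:ℝ), ‖x i (s : ℝ)‖) :
    ∀ (i : Fin N) (t : ℝ), -τ ≤ t → ‖x i t‖ ≤ M0 := by
  have hinit : ∀ s ∈ Icc (-τ) 0, ∀ i, ‖x i s‖ ≤ M0 := fun s hs i =>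
    hM0 ▸ norm_le_iSup_iSup_norm isCompact_Icc (fun i => (hxcont i).mono Icc_subset_Ici_self) i hs
  have hstep : ∀ a, 0 ≤ a → (∀ s ∈ Icc (-τ) a, ∀ i, ‖x i s‖ ≤ M0) →
      ∀ s ∈ Icc a (a + τ), ∀ i, ‖x i s‖ ≤ M0 := by
    intro a ha hpast s hs i
    have hcoef : ∀ t, 0 ≤ α t / ((N : ℝ) - 1) := fun t =>
      div_nonneg (hα01 t).1 (by linarith [show (2 : ℝ) ≤ N by exact_mod_cast hN])
    refine norm_le_of_inner_deriv_nonpos ((hxcont i).mono fun u hu => ?_)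
      (fun t ht => hode i t (ha.trans_lt ht.1)) (fun t ht hlt => ?_) (hpast a ⟨?_, le_rfl⟩ i) s hs
    · exact (neg_nonpos.2 hτ.le).trans (ha.trans hu.1)
    · rw [real_inner_smul_right]
      refine mul_nonpos_of_nonneg_of_nonpos (hcoef t) (real_inner_sum_smul_sub_self_nonpos _
        (fun j _ => (hψpos _ _).le) fun j _ => (hpast (t - τ) ⟨?_, ?_⟩ j).trans hlt.le) <;>
        linarith [ht.1, ht.2]
    · linarith
  exact fun i t ht => forall_of_forall_window_step hτ hinit hstep t ht i

/-- uniform bound for the delayed system by the maximal initial norm. -/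
theorem hk_delay_uniform_bound
    {dim N : ℕ} (hN : 2 ≤ N) (τ : ℝ) (hτ : 0 < τ)
    (ψ : EuclideanSpace ℝ (Fin dim) → EuclideanSpace ℝ (Fin dim) → ℝ)
    (hψpos : ∀ y z, 0 < ψ y z)
    (hψbdd : ∃ K, ∀ y z, ψ y z ≤ K)
    (hψcont : Continuous fun p : EuclideanSpace ℝ (Fin dim) × EuclideanSpace ℝ (Fin dim) => ψ p.1 p.2)
    (α : ℝ → ℝ) (hαcont : Continuous α) (hα01 : ∀ t, α t ∈ Set.Icc (0:ℝ) 1)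
    (x : Fin N → ℝ → EuclideanSpace ℝ (Fin dim))
    (hxcont : ∀ i, ContinuousOn (x i) (Set.Ici (-τ)))
    (hode : ∀ i t, 0 < t → HasDerivAt (x i)
      ((α t / ((N : ℝ) - 1)) •
        ∑ j ∈ Finset.univ.filter (fun j => j ≠ i),
          ψ (x i t) (x j (t - τ)) • (x j (t - τ) - x i t)) t)
    (M0 : ℝ) (hM0 : M0 = ⨆ i, ⨆ s : Set.Icc (-τ) (0:ℝ), ‖x i (s : ℝ)‖) :
    ∀ (i : Fin N) (t : ℝ), -τ ≤ t → ‖x i t‖ ≤ M0 :=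
  hk_delay_uniform_bound_general hN τ hτ ψ hψpos α hα01 x hxcont hode M0 hM0
end

section
/- For the delayed weighted Hegselmann-Krause system, assume the persistence condition (WF): ∫_{t_{n−1}}^{t_n} α(t) dt ≥ ᾱ > 0 and τ ≤ t_n − t_{n−1} ≤ T for all n. Then there exists C ∈ (0,1), independent of N, namely C = max{1 − e^{−K(T+τ)}, 1 − ψ̃_0 e^{−KT} ᾱ}, such that d(t_n) ≤ C · D_{n−2} for all n ≥ 2. -/
/-!
Project the system on a direction `w`: each coordinate `⟪w, x k⟫` solves a scalar delayed
system whose drift is a nonnegative combination of delayed differences, so a strip `[m, M]`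
containing all coordinates over one delay window stays invariant (method of steps). Applied to
all directions this keeps every agent in the initial ball of radius `M̃⁰`, where `ψ ≥ ψ̃₀`.

Take the pair `i, j` realising `d(tₙ)`, `w = xᵢ(tₙ) - xⱼ(tₙ)`, and the strip of the window ending at
`tₙ₋₂`, of width at most `‖w‖ Dₙ₋₂`. If the gap `⟪w, xᵢ - xⱼ⟫` is nonpositive at some time of
`[tₙ₋₁ - τ, tₙ - τ]`, its distance to the strip width decays afterwards at rate at most `K`, which
gives the factor `1 - e^{-K(T+τ)}`. Otherwise, on `[tₙ₋₁, tₙ]` every agent pulls `xᵢ` down and `xⱼ`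
up with weight at least `ψ̃₀`, and by (WF) this closes the fraction `ψ̃₀ e^{-KT} ᾱ` of the strip.
-/

open Set Real
open scoped RealInnerProductSpace

section Calculus

variable {f f' : ℝ → ℝ} {a b : ℝ}

theorem monotoneOn_Icc_of_hasDerivAt_nonneg (hf : ContinuousOn f (Icc a b))
    (hf' : ∀ t ∈ Ioo a b, HasDerivAt f (f' t) t) (hf'₀ : ∀ t ∈ Ioo a b, 0 ≤ f' t) :
    MonotoneOn f (Icc a b) :=
  monotoneOn_of_hasDerivWithinAt_nonneg (convex_Icc a b) hf
    (by simpa only [interior_Icc] using fun t ht => (hf' t ht).hasDerivWithinAt)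
    (by simpa only [interior_Icc] using hf'₀)

theorem le_of_hasDerivAt_nonpos_of_ge {B : ℝ} (hf : ContinuousOn f (Icc a b))
    (hf' : ∀ t ∈ Ioo a b, HasDerivAt f (f' t) t) (hB : ∀ t ∈ Ioo a b, B ≤ f t → f' t ≤ 0)
    (ha : f a ≤ B) : ∀ t ∈ Icc a b, f t ≤ B := by
  intro t ht
  by_contra! hlt
  set S := Icc a t ∩ f ⁻¹' Iic B
  have hS : IsClosed S :=
    (hf.mono (Icc_subset_Icc_right ht.2)).preimage_isClosed_of_isClosed isClosed_Icc isClosed_Iic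
  have hSbdd : BddAbove S := bddAbove_Icc.mono inter_subset_left
  obtain ⟨⟨has, hst⟩, hsB : f (sSup S) ≤ B⟩ := hS.csSup_mem ⟨a, left_mem_Icc.2 ht.1, ha⟩ hSbdd
  -- past the last time `sSup S` at which `f ≤ B`, the derivative is nonpositive
  have habove : ∀ u ∈ Ioc (sSup S) t, B < f u := fun u hu => by
    by_contra! hle
    exact (le_csSup hSbdd ⟨⟨has.trans hu.1.le, hu.2⟩, hle⟩).not_gt hu.1
  have hanti : AntitoneOn f (Icc (sSup S) t) :=
    antitoneOn_of_hasDerivWithinAt_nonpos (convex_Icc _ _)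
      (hf.mono (Icc_subset_Icc has ht.2))
      (by
        simp only [interior_Icc]
        exact fun u hu => (hf' u ⟨has.trans_lt hu.1, hu.2.trans_le ht.2⟩).hasDerivWithinAt)
      (by
        simp only [interior_Icc]
        exact fun u hu => hB u ⟨has.trans_lt hu.1, hu.2.trans_le ht.2⟩
          (habove u ⟨hu.1, hu.2.le⟩).le)
  linarith [hanti (left_mem_Icc.2 hst) (right_mem_Icc.2 hst) hst]

theorem exp_neg_mul_add_integral_le {g : ℝ → ℝ} {K : ℝ} (hK : 0 ≤ K) (hab : a ≤ b)
    (hf : ContinuousOn f (Icc a b)) (hf' : ∀ t ∈ Ioo a b, HasDerivAt f (f' t) t)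
    (hg : Continuous g) (hg₀ : ∀ t ∈ Ioo a b, 0 ≤ g t)
    (hbound : ∀ t ∈ Ioo a b, g t - K * f t ≤ f' t) :
    exp (-K * (b - a)) * (f a + ∫ t in a..b, g t) ≤ f b := by
  have hE : ∀ t, HasDerivAt (fun u => exp (K * (u - a))) (K * exp (K * (t - a))) t := fun t => by
    simpa [mul_comm] using (((hasDerivAt_id t).sub_const a).const_mul K).exp
  have hG := monotoneOn_Icc_of_hasDerivAt_nonneg
    (f := fun t => exp (K * (t - a)) * f t - ∫ s in a..t, g s)
    (((by fun_prop : Continuous fun t => exp (K * (t - a))).continuousOn.mul hf).sub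
      (intervalIntegral.continuous_primitive (fun _ _ => hg.intervalIntegrable _ _) a).continuousOn)
    (fun t ht => ((hE t).mul (hf' t ht)).sub (hg.integral_hasStrictDerivAt a t).hasDerivAt)
    (fun t ht => by
      have he : 1 ≤ exp (K * (t - a)) := one_le_exp (mul_nonneg hK (by linarith [ht.1]))
      nlinarith [mul_le_mul_of_nonneg_left (hbound t ht) (zero_le_one.trans he),
        mul_nonneg (sub_nonneg.2 he) (hg₀ t ht)])
  have := hG (left_mem_Icc.2 hab) (right_mem_Icc.2 hab) hab
  simp only [sub_self, mul_zero, exp_zero, one_mul, intervalIntegral.integral_same] at this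
  calc exp (-K * (b - a)) * (f a + ∫ t in a..b, g t)
      ≤ exp (-K * (b - a)) * (exp (K * (b - a)) * f b) :=
        mul_le_mul_of_nonneg_left (by linarith) (exp_pos _).le
    _ = f b := by rw [← mul_assoc, ← exp_add]; simp

end Calculus

theorem sum_mul_sub_le {ι : Type*} (s : Finset ι) {w z : ι → ℝ} {y M c K : ℝ}
    (hw : ∀ l ∈ s, c ≤ w l ∧ w l ≤ K) (hz : ∀ l ∈ s, z l ≤ M) (hy : y ≤ M) :
    ∑ l ∈ s, w l * (z l - y) ≤ c * ∑ l ∈ s, (z l - M) + s.card * (K * (M - y)) := by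
  rw [Finset.mul_sum, ← nsmul_eq_mul, ← Finset.sum_const, ← Finset.sum_add_distrib]
  refine Finset.sum_le_sum fun l hl => ?_
  nlinarith [mul_le_mul_of_nonpos_right (hw l hl).1 (sub_nonpos.2 (hz l hl)),
    mul_le_mul_of_nonneg_right (hw l hl).2 (sub_nonneg.2 hy)]

noncomputable def delayedDrift {N : ℕ} (τ : ℝ) (α : ℝ → ℝ) (a : Fin N → Fin N → ℝ → ℝ)
    (y : Fin N → ℝ → ℝ) (k : Fin N) (t : ℝ) : ℝ :=
  α t / ((N : ℝ) - 1) * ∑ l ∈ Finset.univ.erase k, a k l t * (y l (t - τ) - y k t)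

theorem delayedDrift_neg {N : ℕ} (τ : ℝ) (α : ℝ → ℝ) (a : Fin N → Fin N → ℝ → ℝ)
    (y : Fin N → ℝ → ℝ) (k : Fin N) (t : ℝ) :
    delayedDrift τ α a (-y) k t = -delayedDrift τ α a y k t := by
  simp only [delayedDrift, Pi.neg_apply, ← mul_neg, ← Finset.sum_neg_distrib]
  congr 1
  exact Finset.sum_congr rfl fun l _ => by ring

/-- The one-dimensional delayed system satisfied by each coordinate `⟪w, x k t⟫` of a solution;
`a k l t` is the weight with which agent `k` reads agent `l` at time `t`. -/
structure IsDelayedScalarSystem (N : ℕ) (τ K : ℝ) (α : ℝ → ℝ) (a : Fin N → Fin N → ℝ → ℝ)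
    (y : Fin N → ℝ → ℝ) : Prop where
  two_le : 2 ≤ N
  delay_pos : 0 < τ
  rate_mem : ∀ t, α t ∈ Icc (0 : ℝ) 1
  weight_nonneg : ∀ k l t, 0 ≤ a k l t
  weight_le : ∀ k l t, a k l t ≤ K
  continuousOn : ∀ k, ContinuousOn (y k) (Ici (-τ))
  hasDerivAt : ∀ k t, 0 < t → HasDerivAt (y k) (delayedDrift τ α a y k t) t

noncomputable def contractionConst (K T τ c abar : ℝ) : ℝ :=
  max (1 - exp (-K * (T + τ))) (1 - c * exp (-K * T) * abar)

theorem contractionConst_mem_Ioo {K T τ c abar : ℝ} (hK : 0 < K) (hT : 0 < T) (hτ : 0 < τ)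
    (hc : 0 < c) (habar : 0 < abar) : contractionConst K T τ c abar ∈ Ioo 0 1 := by
  have h₁ : exp (-K * (T + τ)) < 1 := exp_lt_one_iff.2 (by nlinarith)
  have h₂ : 0 < c * exp (-K * T) * abar := by positivity
  exact ⟨lt_max_of_lt_left (by linarith),
    max_lt (by linarith [exp_pos (-K * (T + τ))]) (by linarith)⟩

namespace IsDelayedScalarSystem

variable {N : ℕ} {τ K : ℝ} {α : ℝ → ℝ} {a : Fin N → Fin N → ℝ → ℝ} {y : Fin N → ℝ → ℝ}

theorem neg (S : IsDelayedScalarSystem N τ K α a y) : IsDelayedScalarSystem N τ K α a (-y) where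
  __ := S
  continuousOn k := (S.continuousOn k).neg
  hasDerivAt k t ht := by
    simpa only [delayedDrift_neg, Pi.neg_apply] using (S.hasDerivAt k t ht).neg

theorem K_nonneg (S : IsDelayedScalarSystem N τ K α a y) (k : Fin N) (t : ℝ) : 0 ≤ K :=
  (S.weight_nonneg k k t).trans (S.weight_le k k t)

theorem sub_one_pos (S : IsDelayedScalarSystem N τ K α a y) : (0 : ℝ) < (N : ℝ) - 1 := by
  have : (2 : ℝ) ≤ N := by exact_mod_cast S.two_le
  linarith

theorem delayedDrift_le (S : IsDelayedScalarSystem N τ K α a y) {k : Fin N} {t c M : ℝ}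
    (hc : ∀ l, c ≤ a k l t) (hz : ∀ l, y l (t - τ) ≤ M) (hy : y k t ≤ M) :
    delayedDrift τ α a y k t ≤
      α t * c / ((N : ℝ) - 1) * ∑ l ∈ Finset.univ.erase k, (y l (t - τ) - M) + K * (M - y k t) := by
  have hN := S.sub_one_pos
  have hsum := sum_mul_sub_le (Finset.univ.erase k) (w := fun l => a k l t)
    (fun l _ => ⟨hc l, S.weight_le k l t⟩) (fun l _ => hz l) hy
  rw [Finset.card_erase_of_mem (Finset.mem_univ k), Finset.card_univ, Fintype.card_fin,
    Nat.cast_sub (by linarith [S.two_le]), Nat.cast_one] at hsum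
  have hα := S.rate_mem t
  have hK := mul_nonneg (S.K_nonneg k t) (sub_nonneg.2 hy)
  calc delayedDrift τ α a y k t
      ≤ α t / ((N : ℝ) - 1) *
          (c * ∑ l ∈ Finset.univ.erase k, (y l (t - τ) - M) + ((N : ℝ) - 1) * (K * (M - y k t))) :=
        mul_le_mul_of_nonneg_left hsum (div_nonneg hα.1 hN.le)
    _ = α t * c / ((N : ℝ) - 1) * ∑ l ∈ Finset.univ.erase k, (y l (t - τ) - M) +
          α t * (K * (M - y k t)) := by
        field_simp
    _ ≤ _ := by nlinarith [hα.2]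

theorem delayedDrift_nonpos (S : IsDelayedScalarSystem N τ K α a y) {k : Fin N} {t : ℝ}
    (h : ∀ l, y l (t - τ) ≤ y k t) : delayedDrift τ α a y k t ≤ 0 := by
  simpa using S.delayedDrift_le (fun l => S.weight_nonneg k l t) h le_rfl

theorem le_of_le_on_window (S : IsDelayedScalarSystem N τ K α a y) {t₀ B : ℝ} (ht₀ : 0 ≤ t₀)
    (hwin : ∀ l, ∀ s ∈ Icc (t₀ - τ) t₀, y l s ≤ B) : ∀ l t, t₀ - τ ≤ t → y l t ≤ B := by
  have hτ := S.delay_pos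
  -- method of steps: a bound on `[t₀ - τ, u]` propagates to `[t₀ - τ, u + τ]`
  have step : ∀ u, t₀ ≤ u → (∀ l, ∀ s ∈ Icc (t₀ - τ) u, y l s ≤ B) →
      ∀ l, ∀ s ∈ Icc (t₀ - τ) (u + τ), y l s ≤ B := by
    intro u hu h l s hs
    rcases le_or_gt s u with hsu | hsu
    · exact h l s ⟨hs.1, hsu⟩
    refine le_of_hasDerivAt_nonpos_of_ge ((S.continuousOn l).mono fun v hv => ?_)
      (fun v hv => S.hasDerivAt l v (by linarith [hv.1]))
      (fun v hv hBv => S.delayedDrift_nonpos fun m => (h m (v - τ) ?_).trans hBv)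
      (h l u ⟨by linarith, le_rfl⟩) s ⟨hsu.le, hs.2⟩
    · exact mem_Ici.2 (by linarith [hv.1])
    · exact ⟨by linarith [hv.1], by linarith [hv.2]⟩
  have iter : ∀ n : ℕ, ∀ l, ∀ s ∈ Icc (t₀ - τ) (t₀ + n * τ), y l s ≤ B := by
    intro n
    induction n with
    | zero => simpa using hwin
    | succ n ih =>
      intro l s hs
      push_cast at hs
      exact step _ (by nlinarith [n.cast_nonneg (α := ℝ)]) ih l s ⟨hs.1, by linarith [hs.2]⟩
  intro l t ht
  obtain ⟨n, hn⟩ := exists_nat_ge ((t - t₀) / τ)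
  rw [div_le_iff₀ hτ] at hn
  exact iter n l t ⟨ht, by linarith⟩

theorem mem_Icc_of_mem_Icc_on_window (S : IsDelayedScalarSystem N τ K α a y) {t₀ m M : ℝ}
    (ht₀ : 0 ≤ t₀) (hwin : ∀ l, ∀ s ∈ Icc (t₀ - τ) t₀, y l s ∈ Icc m M) :
    ∀ l t, t₀ - τ ≤ t → y l t ∈ Icc m M := fun l t ht =>
  ⟨neg_le_neg_iff.1
      (S.neg.le_of_le_on_window ht₀ (fun l s hs => neg_le_neg (hwin l s hs).1) l t ht),
    S.le_of_le_on_window ht₀ (fun l s hs => (hwin l s hs).2) l t ht⟩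

theorem delayedDrift_sub_le (S : IsDelayedScalarSystem N τ K α a y) {i j : Fin N} {t c m M : ℝ}
    (hc : ∀ l, c ≤ a i l t ∧ c ≤ a j l t) (hz : ∀ l, y l (t - τ) ∈ Icc m M)
    (hi : y i t ≤ M) (hj : m ≤ y j t) :
    delayedDrift τ α a y i t - delayedDrift τ α a y j t ≤
      K * ((M - m) - (y i t - y j t)) - α t * c * (M - m) +
        α t * c / ((N : ℝ) - 1) * (y j (t - τ) - y i (t - τ)) := by
  have hI := S.delayedDrift_le (fun l => (hc l).1) (fun l => (hz l).2) hi
  have hJ := S.neg.delayedDrift_le (M := -m) (fun l => (hc l).2)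
    (fun l => neg_le_neg (hz l).1) (neg_le_neg hj)
  simp only [delayedDrift_neg, Pi.neg_apply] at hJ
  have hN := S.sub_one_pos.ne'
  -- the two sums over `l ≠ i` and `l ≠ j` differ only in the terms `l = j` and `l = i`
  have hsums : ∑ l ∈ Finset.univ.erase i, (y l (t - τ) - M) +
      ∑ l ∈ Finset.univ.erase j, (-y l (t - τ) - -m) =
        (y j (t - τ) - y i (t - τ)) - ((N : ℝ) - 1) * (M - m) := by
    rw [Finset.sum_erase_eq_sub (Finset.mem_univ i), Finset.sum_erase_eq_sub (Finset.mem_univ j),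
      Finset.sum_sub_distrib, Finset.sum_sub_distrib, Finset.sum_neg_distrib, Finset.sum_const,
      Finset.sum_const, Finset.card_univ, Fintype.card_fin, nsmul_eq_mul, nsmul_eq_mul]
    ring
  have key : α t * c / ((N : ℝ) - 1) * ∑ l ∈ Finset.univ.erase i, (y l (t - τ) - M) +
      α t * c / ((N : ℝ) - 1) * ∑ l ∈ Finset.univ.erase j, (-y l (t - τ) - -m) =
        α t * c / ((N : ℝ) - 1) * (y j (t - τ) - y i (t - τ)) - α t * c * (M - m) := by
    rw [← mul_add, hsums]
    field_simp
  linarith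

theorem hasDerivAt_gap (S : IsDelayedScalarSystem N τ K α a y) (i j : Fin N) (L : ℝ) {t : ℝ}
    (ht : 0 < t) :
    HasDerivAt (fun u => L - (y i u - y j u))
      (-(delayedDrift τ α a y i t - delayedDrift τ α a y j t)) t :=
  ((S.hasDerivAt i t ht).sub (S.hasDerivAt j t ht)).const_sub L

theorem continuousOn_gap (S : IsDelayedScalarSystem N τ K α a y) (i j : Fin N) (L : ℝ)
    {s t : ℝ} (hs : -τ ≤ s) : ContinuousOn (fun u => L - (y i u - y j u)) (Icc s t) :=
  (continuousOn_const.sub ((S.continuousOn i).sub (S.continuousOn j))).mono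
    fun _ hu => mem_Ici.2 (hs.trans hu.1)

/-- Once the ordering of `y i` and `y j` has been reversed, their gap relaxes at rate at most `K`
towards the width `M - m` of the invariant strip. -/
theorem sub_le_of_reversed_at (S : IsDelayedScalarSystem N τ K α a y) {t₀ s t m M : ℝ}
    (ht₀ : 0 ≤ t₀) (hs : t₀ ≤ s) (hst : s ≤ t)
    (hwin : ∀ l, ∀ u ∈ Icc (t₀ - τ) t₀, y l u ∈ Icc m M) {i j : Fin N} (hij : y i s ≤ y j s) :
    y i t - y j t ≤ (1 - exp (-K * (t - s))) * (M - m) := by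
  have hb := S.mem_Icc_of_mem_Icc_on_window ht₀ hwin
  have hτ := S.delay_pos
  have hdrift : ∀ u ∈ Ioo s t, 0 - K * ((M - m) - (y i u - y j u)) ≤
      -(delayedDrift τ α a y i u - delayedDrift τ α a y j u) := fun u hu => by
    have h := S.delayedDrift_sub_le (c := 0)
      (fun l => ⟨S.weight_nonneg i l u, S.weight_nonneg j l u⟩)
      (fun l => hb l _ (by linarith [hu.1])) (hb i u (by linarith [hu.1])).2
      (hb j u (by linarith [hu.1])).1
    simp only [mul_zero, zero_mul, zero_div, sub_zero, add_zero] at h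
    linarith
  have key := exp_neg_mul_add_integral_le (g := fun _ => 0) (S.K_nonneg i t) hst
    (S.continuousOn_gap i j (M - m) (by linarith))
    (fun u hu => S.hasDerivAt_gap i j (M - m) (by linarith [hu.1]))
    continuous_const (fun _ _ => le_rfl) hdrift
  simp only [intervalIntegral.integral_zero, add_zero] at key
  nlinarith [(hb i t (by linarith)).1, (hb i t (by linarith)).2, exp_pos (-K * (t - s))]

/-- While `y i` stays above `y j` one delay earlier, every other agent pulls `y i` down and `y j`
up with weight at least `c`, which closes a fixed fraction of the strip. -/
theorem sub_le_of_ordered_on (S : IsDelayedScalarSystem N τ K α a y) (hα : Continuous α)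
    {t₀ t₁ t₂ c m M : ℝ} (ht₀ : 0 ≤ t₀) (h₀₁ : t₀ ≤ t₁) (h₁₂ : t₁ ≤ t₂) (hc : 0 ≤ c)
    (hca : ∀ k l t, 0 ≤ t → c ≤ a k l t)
    (hwin : ∀ l, ∀ u ∈ Icc (t₀ - τ) t₀, y l u ∈ Icc m M) {i j : Fin N}
    (hij : ∀ s ∈ Ioo (t₁ - τ) (t₂ - τ), y j s ≤ y i s) :
    y i t₂ - y j t₂ ≤ (1 - c * exp (-K * (t₂ - t₁)) * ∫ t in t₁..t₂, α t) * (M - m) := by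
  have hb := S.mem_Icc_of_mem_Icc_on_window ht₀ hwin
  have hτ := S.delay_pos
  have hMm : 0 ≤ M - m := by linarith [(hb i t₀ (by linarith)).1, (hb i t₀ (by linarith)).2]
  have hdrift : ∀ u ∈ Ioo t₁ t₂, c * (M - m) * α u - K * ((M - m) - (y i u - y j u)) ≤
      -(delayedDrift τ α a y i u - delayedDrift τ α a y j u) := fun u hu => by
    have h := S.delayedDrift_sub_le
      (fun l => ⟨hca i l u (by linarith [hu.1]), hca j l u (by linarith [hu.1])⟩)
      (fun l => hb l _ (by linarith [hu.1])) (hb i u (by linarith [hu.1])).2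
      (hb j u (by linarith [hu.1])).1
    have hlag : α u * c / ((N : ℝ) - 1) * (y j (u - τ) - y i (u - τ)) ≤ 0 :=
      mul_nonpos_of_nonneg_of_nonpos
        (div_nonneg (mul_nonneg (S.rate_mem u).1 hc) S.sub_one_pos.le)
        (sub_nonpos.2 (hij _ ⟨by linarith [hu.1], by linarith [hu.2]⟩))
    linarith
  have key := exp_neg_mul_add_integral_le (g := fun u => c * (M - m) * α u) (S.K_nonneg i t₁) h₁₂
    (S.continuousOn_gap i j (M - m) (by linarith))
    (fun u hu => S.hasDerivAt_gap i j (M - m) (by linarith [hu.1]))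
    (continuous_const.mul hα) (fun u _ => mul_nonneg (mul_nonneg hc hMm) (S.rate_mem u).1) hdrift
  rw [intervalIntegral.integral_const_mul] at key
  have hφ₁ : 0 ≤ exp (-K * (t₂ - t₁)) * (M - m - (y i t₁ - y j t₁)) :=
    mul_nonneg (exp_pos _).le (by linarith [(hb i t₁ (by linarith)).2, (hb j t₁ (by linarith)).1])
  linarith

theorem sub_le_contractionConst_mul (S : IsDelayedScalarSystem N τ K α a y) (hα : Continuous α)
    {t₀ t₁ t₂ T abar c m M : ℝ} (ht₀ : 0 ≤ t₀) (h₀₁ : t₀ + τ ≤ t₁) (h₁₂ : t₁ ≤ t₂)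
    (hT : t₂ - t₁ ≤ T) (hint : abar ≤ ∫ t in t₁..t₂, α t) (hc : 0 ≤ c)
    (hca : ∀ k l t, 0 ≤ t → c ≤ a k l t)
    (hwin : ∀ l, ∀ u ∈ Icc (t₀ - τ) t₀, y l u ∈ Icc m M) (i j : Fin N) :
    y i t₂ - y j t₂ ≤ contractionConst K T τ c abar * (M - m) := by
  have hτ := S.delay_pos
  have hK := S.K_nonneg i t₀
  have hMm : 0 ≤ M - m := by
    have := hwin i t₀ ⟨by linarith, le_rfl⟩
    linarith [this.1, this.2]
  by_cases h : ∃ s ∈ Icc (t₁ - τ) (t₂ - τ), y i s ≤ y j s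
  · obtain ⟨s, hs, hij⟩ := h
    have hexp : exp (-K * (T + τ)) ≤ exp (-K * (t₂ - s)) :=
      exp_le_exp.2 (by nlinarith [hs.1])
    calc y i t₂ - y j t₂ ≤ (1 - exp (-K * (t₂ - s))) * (M - m) :=
          S.sub_le_of_reversed_at ht₀ (by linarith [hs.1]) (by linarith [hs.2]) hwin hij
      _ ≤ (1 - exp (-K * (T + τ))) * (M - m) := by gcongr
      _ ≤ _ := mul_le_mul_of_nonneg_right (le_max_left _ _) hMm
  · push Not at h
    have hexp : exp (-K * T) ≤ exp (-K * (t₂ - t₁)) := exp_le_exp.2 (by nlinarith)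
    have hα₀ : 0 ≤ ∫ t in t₁..t₂, α t :=
      intervalIntegral.integral_nonneg h₁₂ fun t _ => (S.rate_mem t).1
    calc y i t₂ - y j t₂ ≤ (1 - c * exp (-K * (t₂ - t₁)) * ∫ t in t₁..t₂, α t) * (M - m) :=
          S.sub_le_of_ordered_on hα ht₀ (by linarith) h₁₂ hc hca hwin
            fun s hs => (h s ⟨hs.1.le, hs.2.le⟩).le
      _ ≤ (1 - c * exp (-K * T) * abar) * (M - m) := by
          gcongr (1 - ?_) * _
          exact mul_le_mul_of_nonneg (mul_le_mul_of_nonneg_left hexp hc) hint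
            (mul_nonneg hc (exp_pos _).le) hα₀
      _ ≤ _ := mul_le_mul_of_nonneg_right (le_max_right _ _) hMm

end IsDelayedScalarSystem

section InnerProductSpace

variable {E : Type*} [NormedAddCommGroup E] [InnerProductSpace ℝ E] {N : ℕ} {τ K : ℝ}
  {α : ℝ → ℝ} {a : Fin N → Fin N → ℝ → ℝ} {x : Fin N → ℝ → E}

theorem isDelayedScalarSystem_inner {ψ : E → E → ℝ} (hN : 2 ≤ N) (hτ : 0 < τ)
    (hα : ∀ t, α t ∈ Icc (0 : ℝ) 1) (hψ : ∀ y z, 0 ≤ ψ y z) (hK : ∀ y z, ψ y z ≤ K)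
    (hx : ∀ i, ContinuousOn (x i) (Ici (-τ)))
    (hode : ∀ i t, 0 < t → HasDerivAt (x i)
      ((α t / ((N : ℝ) - 1)) •
        ∑ j ∈ Finset.univ.filter (fun j => j ≠ i),
          ψ (x i t) (x j (t - τ)) • (x j (t - τ) - x i t)) t) (w : E) :
    IsDelayedScalarSystem N τ K α (fun k l t => ψ (x k t) (x l (t - τ)))
      (fun k t => ⟪w, x k t⟫) where
  two_le := hN
  delay_pos := hτ
  rate_mem := hα
  weight_nonneg _ _ _ := hψ _ _
  weight_le _ _ _ := hK _ _
  continuousOn k := continuousOn_const.inner (hx k)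
  hasDerivAt k t ht := by
    have := (hasDerivAt_const t w).inner ℝ (hode k t ht)
    simpa [delayedDrift, Finset.filter_ne', inner_smul_right, inner_sum, inner_sub_right,
      Finset.mul_sum] using this

theorem norm_le_of_forall_inner
    (hS : ∀ w : E, IsDelayedScalarSystem N τ K α a (fun k t => ⟪w, x k t⟫))
    {t₀ R : ℝ} (ht₀ : 0 ≤ t₀) (hwin : ∀ k, ∀ s ∈ Icc (t₀ - τ) t₀, ‖x k s‖ ≤ R) :
    ∀ k t, t₀ - τ ≤ t → ‖x k t‖ ≤ R := by
  intro k t ht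
  have hR : 0 ≤ R := (norm_nonneg _).trans (hwin k t₀ ⟨by linarith [(hS 0).delay_pos], le_rfl⟩)
  have h := (hS (x k t)).le_of_le_on_window (B := ‖x k t‖ * R) ht₀
    (fun l s hs => (real_inner_le_norm _ _).trans
      (mul_le_mul_of_nonneg_left (hwin l s hs) (norm_nonneg _))) k t ht
  rw [real_inner_self_eq_norm_mul_norm] at h
  nlinarith [norm_nonneg (x k t)]

theorem norm_sub_le_contractionConst_mul
    (hS : ∀ w : E, IsDelayedScalarSystem N τ K α a (fun k t => ⟪w, x k t⟫)) (hα : Continuous α)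
    {t₀ t₁ t₂ T abar c D : ℝ} (ht₀ : 0 ≤ t₀) (h₀₁ : t₀ + τ ≤ t₁) (h₁₂ : t₁ ≤ t₂)
    (hT : t₂ - t₁ ≤ T) (hint : abar ≤ ∫ t in t₁..t₂, α t) (hc : 0 ≤ c)
    (hca : ∀ k l t, 0 ≤ t → c ≤ a k l t)
    (hD : ∀ k l, ∀ s ∈ Icc (t₀ - τ) t₀, ∀ s' ∈ Icc (t₀ - τ) t₀, ‖x k s - x l s'‖ ≤ D)
    (i j : Fin N) : ‖x i t₂ - x j t₂‖ ≤ contractionConst K T τ c abar * D := by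
  set w := x i t₂ - x j t₂
  have hτ := (hS w).delay_pos
  have hwin : Icc (t₀ - τ) t₀ ⊆ Ici (-τ) := fun s hs => mem_Ici.2 (by linarith [hs.1])
  obtain ⟨⟨k, s⟩, ⟨-, hs⟩, hmin⟩ := (isCompact_univ.prod isCompact_Icc).exists_isMinOn
    ⟨(i, t₀), mem_univ i, by linarith, le_rfl⟩
    (continuousOn_prod_of_discrete_left.2 fun k => ((hS w).continuousOn k).mono
      fun s hs => hwin (mem_prod.1 hs).2 : ContinuousOn (fun p : Fin N × ℝ => ⟪w, x p.1 p.2⟫)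
        (univ ×ˢ Icc (t₀ - τ) t₀))
  have hstrip : ∀ l, ∀ u ∈ Icc (t₀ - τ) t₀, ⟪w, x l u⟫ ∈ Icc ⟪w, x k s⟫ (⟪w, x k s⟫ + ‖w‖ * D) :=
    fun l u hu => ⟨hmin (mk_mem_prod (mem_univ l) hu), by
      have := (real_inner_le_norm w (x l u - x k s)).trans
        (mul_le_mul_of_nonneg_left (hD l k u hu s hs) (norm_nonneg w))
      rw [inner_sub_right] at this
      linarith⟩
  have h := (hS w).sub_le_contractionConst_mul hα ht₀ h₀₁ h₁₂ hT hint hc hca hstrip i j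
  rw [← inner_sub_right, real_inner_self_eq_norm_mul_norm, add_sub_cancel_left] at h
  have hD₀ : 0 ≤ D := by simpa using hD k k s hs s hs
  have hC₀ : 0 ≤ contractionConst K T τ c abar :=
    le_max_of_le_left (sub_nonneg.2 (exp_le_one_iff.2 (by nlinarith [(hS w).K_nonneg k s])))
  nlinarith [norm_nonneg w, mul_nonneg hC₀ hD₀]

end InnerProductSpace

theorem sInf_closedBall_pos {E : Type*} [NormedAddCommGroup E] [ProperSpace E]
    {ψ : E → E → ℝ} (hψ : Continuous fun p : E × E => ψ p.1 p.2) (hpos : ∀ y z, 0 < ψ y z)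
    {R : ℝ} (hR : 0 ≤ R) : 0 < sInf {r : ℝ | ∃ y z : E, ‖y‖ ≤ R ∧ ‖z‖ ≤ R ∧ ψ y z = r} := by
  have hset : {r : ℝ | ∃ y z : E, ‖y‖ ≤ R ∧ ‖z‖ ≤ R ∧ ψ y z = r} =
      (fun p : E × E => ψ p.1 p.2) '' (Metric.closedBall 0 R ×ˢ Metric.closedBall 0 R) := by
    ext r
    simp
  have hR₀ := Metric.mem_closedBall_self (x := (0 : E)) hR
  rw [hset]
  obtain ⟨p, -, hp⟩ := (((isCompact_closedBall 0 R).prod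
    (isCompact_closedBall 0 R)).image_of_continuousOn hψ.continuousOn).sInf_mem
      ⟨ψ 0 0, (0, 0), ⟨hR₀, hR₀⟩, rfl⟩
  exact hp ▸ hpos _ _

theorem le_ciSup₄_of_forall_le {ι κ σ ρ : Type*} {f : ι → κ → σ → ρ → ℝ} {B : ℝ}
    (hB : ∀ a b c d, f a b c d ≤ B) (hB₀ : 0 ≤ B) (a : ι) (b : κ) (c : σ) (d : ρ) :
    f a b c d ≤ ⨆ a, ⨆ b, ⨆ c, ⨆ d, f a b c d := by
  have h₃ : ∀ a b c, ⨆ d, f a b c d ≤ B := fun a b c => Real.iSup_le (hB a b c) hB₀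
  have h₂ : ∀ a b, ⨆ c, ⨆ d, f a b c d ≤ B := fun a b => Real.iSup_le (h₃ a b) hB₀
  have h₁ : ∀ a, ⨆ b, ⨆ c, ⨆ d, f a b c d ≤ B := fun a => Real.iSup_le (h₂ a) hB₀
  exact le_ciSup_of_le ⟨B, forall_mem_range.2 h₁⟩ a <|
    le_ciSup_of_le ⟨B, forall_mem_range.2 (h₂ a)⟩ b <|
    le_ciSup_of_le ⟨B, forall_mem_range.2 (h₃ a b)⟩ c <|
    le_ciSup ⟨B, forall_mem_range.2 (hB a b c)⟩ d

section Suprema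

variable {ι E : Type*} [SeminormedAddCommGroup E] {x : ι → ℝ → E} {a b : ℝ}

theorem norm_le_iSup_iSup_norm_s12 [Finite ι] (hx : ∀ i, ContinuousOn (x i) (Icc a b)) (k : ι)
    {s : ℝ} (hs : s ∈ Icc a b) : ‖x k s‖ ≤ ⨆ i, ⨆ s : Icc a b, ‖x i s‖ := by
  refine le_ciSup_of_le (Finite.bddAbove_range _) k
    (le_ciSup (f := fun s : Icc a b => ‖x k s‖) ?_ ⟨s, hs⟩)
  simpa only [image_eq_range] using (isCompact_Icc.image_of_continuousOn (hx k).norm).bddAbove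

theorem norm_sub_le_iSup_norm_sub {R : ℝ} (hR : ∀ i, ∀ s ∈ Icc a b, ‖x i s‖ ≤ R) (k l : ι)
    {s s' : ℝ} (hs : s ∈ Icc a b) (hs' : s' ∈ Icc a b) :
    ‖x k s - x l s'‖ ≤ ⨆ i, ⨆ j, ⨆ s : Icc a b, ⨆ t : Icc a b, ‖x i s - x j t‖ :=
  le_ciSup₄_of_forall_le (f := fun i j (s t : Icc a b) => ‖x i s - x j t‖)
    (fun i j s t => (norm_sub_le _ _).trans (add_le_add (hR i s s.2) (hR j t t.2)))
    (by linarith [norm_nonneg (x k s), hR k s hs]) k l ⟨s, hs⟩ ⟨s', hs'⟩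

end Suprema

theorem hk_delay_contraction_general
    {dim N : ℕ} (hN : 2 ≤ N) (τ : ℝ) (hτ : 0 < τ)
    (ψ : EuclideanSpace ℝ (Fin dim) → EuclideanSpace ℝ (Fin dim) → ℝ)
    (hψpos : ∀ y z, 0 < ψ y z)
    (hψcont : Continuous fun p : EuclideanSpace ℝ (Fin dim) × EuclideanSpace ℝ (Fin dim) => ψ p.1 p.2)
    (α : ℝ → ℝ) (hαcont : Continuous α) (hα01 : ∀ t, α t ∈ Set.Icc (0:ℝ) 1)
    (x : Fin N → ℝ → EuclideanSpace ℝ (Fin dim))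
    (hxcont : ∀ i, ContinuousOn (x i) (Set.Ici (-τ)))
    (hode : ∀ i t, 0 < t → HasDerivAt (x i)
      ((α t / ((N : ℝ) - 1)) •
        ∑ j ∈ Finset.univ.filter (fun j => j ≠ i),
          ψ (x i t) (x j (t - τ)) • (x j (t - τ) - x i t)) t)
    (K : ℝ) (hK : ∀ y z, ψ y z ≤ K)
    (T abar : ℝ) (hT : 0 < T) (habar : 0 < abar)
    (tseq : ℕ → ℝ) (ht0 : tseq 0 = 0) (htmono : StrictMono tseq)
    (hgap : ∀ n : ℕ, τ ≤ tseq (n + 1) - tseq n ∧ tseq (n + 1) - tseq n ≤ T)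
    (hint : ∀ n : ℕ, abar ≤ ∫ t in (tseq n)..(tseq (n + 1)), α t)
    (M0 : ℝ) (hM0 : M0 = ⨆ i, ⨆ s : Set.Icc (-τ) (0:ℝ), ‖x i (s : ℝ)‖)
    (ψ0 : ℝ)
    (hψ0 : ψ0 = sInf {r : ℝ | ∃ y z : EuclideanSpace ℝ (Fin dim),
      ‖y‖ ≤ M0 ∧ ‖z‖ ≤ M0 ∧ ψ y z = r})
    (diam : ℝ → ℝ) (hdiam : ∀ t, diam t = ⨆ i, ⨆ j, ‖x i t - x j t‖)
    (D : ℕ → ℝ)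
    (hD : ∀ n, D n = ⨆ i, ⨆ j, ⨆ s : Set.Icc (tseq n - τ) (tseq n),
      ⨆ t : Set.Icc (tseq n - τ) (tseq n), ‖x i (s : ℝ) - x j (t : ℝ)‖)
    (C : ℝ)
    (hC : C = max (1 - Real.exp (-K * (T + τ))) (1 - ψ0 * Real.exp (-K * T) * abar)) :
    C ∈ Set.Ioo (0:ℝ) 1 ∧ ∀ n : ℕ, 2 ≤ n → diam (tseq n) ≤ C * D (n - 2) := by
  have : Nonempty (Fin N) := ⟨⟨0, by omega⟩⟩
  have hS := isDelayedScalarSystem_inner (x := x) hN hτ hα01 (fun y z => (hψpos y z).le) hK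
    hxcont hode
  have hball : ∀ k t, -τ ≤ t → ‖x k t‖ ≤ M0 := by
    simpa using norm_le_of_forall_inner hS le_rfl fun k s hs => hM0 ▸
      norm_le_iSup_iSup_norm_s12 (fun i => (hxcont i).mono Icc_subset_Ici_self) k (by simpa using hs)
  have hψ0pos : 0 < ψ0 := hψ0 ▸ sInf_closedBall_pos hψcont hψpos
    ((norm_nonneg _).trans (hball ⟨0, by omega⟩ 0 (by linarith)))
  have hψ0le : ∀ k l t, 0 ≤ t → ψ0 ≤ ψ (x k t) (x l (t - τ)) := fun k l t ht => hψ0 ▸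
    csInf_le ⟨0, by rintro _ ⟨y, z, -, -, rfl⟩; exact (hψpos y z).le⟩
      ⟨_, _, hball k t (by linarith), hball l (t - τ) (by linarith), rfl⟩
  refine ⟨hC ▸ contractionConst_mem_Ioo ((hψpos 0 0).trans_le (hK 0 0)) hT hτ hψ0pos habar,
    fun n hn => ?_⟩
  obtain ⟨k, rfl⟩ : ∃ k, n = k + 2 := ⟨n - 2, by omega⟩
  have htk : 0 ≤ tseq k := ht0 ▸ htmono.monotone (Nat.zero_le k)
  obtain ⟨⟨i, j⟩, hmax⟩ := Finite.exists_max fun p : Fin N × Fin N =>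
    ‖x p.1 (tseq (k + 2)) - x p.2 (tseq (k + 2))‖
  rw [hdiam, hC, Nat.add_sub_cancel]
  exact (ciSup_le fun i' => ciSup_le fun j' => hmax (i', j')).trans
    (norm_sub_le_contractionConst_mul hS hαcont htk (by linarith [(hgap k).1])
      (by linarith [(hgap (k + 1)).1]) (hgap (k + 1)).2 (hint (k + 1)) hψ0pos.le hψ0le
      (fun k' l s hs s' hs' => hD k ▸ norm_sub_le_iSup_norm_sub
        (fun i s hs => hball i s (by linarith [hs.1])) k' l hs hs') i j)

/-- two-step contraction d(tₙ) ≤ C D_{n-2} for the delayed system under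
the persistence condition (WF), with C = max {1 - e^{-K(T+τ)}, 1 - ψ̃₀ e^{-KT} ᾱ}. -/
theorem hk_delay_contraction
    {dim N : ℕ} (hN : 2 ≤ N) (τ : ℝ) (hτ : 0 < τ)
    (ψ : EuclideanSpace ℝ (Fin dim) → EuclideanSpace ℝ (Fin dim) → ℝ)
    (hψpos : ∀ y z, 0 < ψ y z)
    (hψbdd : ∃ K, ∀ y z, ψ y z ≤ K)
    (hψcont : Continuous fun p : EuclideanSpace ℝ (Fin dim) × EuclideanSpace ℝ (Fin dim) => ψ p.1 p.2)
    (α : ℝ → ℝ) (hαcont : Continuous α) (hα01 : ∀ t, α t ∈ Set.Icc (0:ℝ) 1)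
    (x : Fin N → ℝ → EuclideanSpace ℝ (Fin dim))
    (hxcont : ∀ i, ContinuousOn (x i) (Set.Ici (-τ)))
    (hode : ∀ i t, 0 < t → HasDerivAt (x i)
      ((α t / ((N : ℝ) - 1)) •
        ∑ j ∈ Finset.univ.filter (fun j => j ≠ i),
          ψ (x i t) (x j (t - τ)) • (x j (t - τ) - x i t)) t)
    (K : ℝ) (hK : ∀ y z, ψ y z ≤ K)
    (T abar : ℝ) (hT : 0 < T) (habar : 0 < abar)
    (tseq : ℕ → ℝ) (ht0 : tseq 0 = 0) (htmono : StrictMono tseq)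
    (hgap : ∀ n : ℕ, τ ≤ tseq (n + 1) - tseq n ∧ tseq (n + 1) - tseq n ≤ T)
    (hint : ∀ n : ℕ, abar ≤ ∫ t in (tseq n)..(tseq (n + 1)), α t)
    (M0 : ℝ) (hM0 : M0 = ⨆ i, ⨆ s : Set.Icc (-τ) (0:ℝ), ‖x i (s : ℝ)‖)
    (ψ0 : ℝ)
    (hψ0 : ψ0 = sInf {r : ℝ | ∃ y z : EuclideanSpace ℝ (Fin dim),
      ‖y‖ ≤ M0 ∧ ‖z‖ ≤ M0 ∧ ψ y z = r})
    (diam : ℝ → ℝ) (hdiam : ∀ t, diam t = ⨆ i, ⨆ j, ‖x i t - x j t‖)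
    (D : ℕ → ℝ)
    (hD : ∀ n, D n = ⨆ i, ⨆ j, ⨆ s : Set.Icc (tseq n - τ) (tseq n),
      ⨆ t : Set.Icc (tseq n - τ) (tseq n), ‖x i (s : ℝ) - x j (t : ℝ)‖)
    (C : ℝ)
    (hC : C = max (1 - Real.exp (-K * (T + τ))) (1 - ψ0 * Real.exp (-K * T) * abar)) :
    C ∈ Set.Ioo (0:ℝ) 1 ∧ ∀ n : ℕ, 2 ≤ n → diam (tseq n) ≤ C * D (n - 2) :=
  hk_delay_contraction_general hN τ hτ ψ hψpos hψcont α hαcont hα01 x hxcont hode K hK T abar hT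
    habar tseq ht0 htmono hgap hint M0 hM0 ψ0 hψ0 diam hdiam D hD C hC
end

section
/- Under the persistence condition (WF) (times t_n with τ ≤ t_n − t_{n−1} ≤ T and ∫_{t_{n−1}}^{t_n} α ≥ ᾱ > 0), every solution of the delayed weighted Hegselmann-Krause system converges exponentially to consensus without any smallness condition on the delay τ: there exists γ̃ > 0, independent of N, such that d(t) ≤ (max_{i,j} max_{r,s∈[−τ,0]} |x_i(r) − x_j(s)|) e^{−γ̃ (t − 3T + τ)} for all t ≥ 0. -/
/-!
Projecting onto a direction `v`, the scalars `⟪v, x i t⟫` solve a linear delayed consensus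
system with nonnegative weights whose row sums are at most `K = sup ψ`. A maximum principle
(method of steps) shows that all later values of `⟪v, x⟫` stay between its bounds on a history
window `[a - τ, a]`; hence trajectories stay in a ball, on which `ψ ≥ ψ₀ > 0`, and the
diameter of the history window never increases. Above the window minimum `m`, the excess `⟪v, x i t⟫ - m` decays
at most like `e^{-K t}`, and across an interval with `∫ α ≥ ᾱ` the excess of one agent is passed
on to every other agent with weight `ψ₀ ᾱ / (N - 1)`. Applying this from below and from above
over three consecutive intervals (the first lets the delay pass, the second carries `∫ α ≥ ᾱ`,
the third contains the new window) contracts the oscillation of `⟪v, x⟫`, and thus the window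
diameter, by `1 - min 1 (ψ₀ ᾱ / (N - 1)) e^{-3KT}`; iterating gives the exponential rate.
-/

open Set Real
open scoped RealInnerProductSpace

theorem le_of_hasDerivAt_nonpos_of_lt {f f' : ℝ → ℝ} {a b M : ℝ} (hab : a ≤ b)
    (hf : ContinuousOn f (Icc a b)) (hf' : ∀ t ∈ Ioo a b, HasDerivAt f (f' t) t)
    (hf'_nonpos : ∀ t ∈ Ioo a b, M < f t → f' t ≤ 0) (ha : f a ≤ M) : f b ≤ M := by
  by_contra! hb
  set S := Icc a b ∩ f ⁻¹' Iic M
  have hSbdd : BddAbove S := ⟨b, fun s hs => hs.1.2⟩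
  have hcS : sSup S ∈ S :=
    (hf.preimage_isClosed_of_isClosed isClosed_Icc isClosed_Iic).csSup_mem
      ⟨a, ⟨left_mem_Icc.2 hab, ha⟩⟩ hSbdd
  set c := sSup S
  have hcb : c < b := hcS.1.2.lt_of_ne fun h => hb.not_ge (h ▸ hcS.2)
  have hgt : ∀ s ∈ Ioo c b, M < f s := fun s hs => by
    by_contra! h
    exact hs.1.not_ge (le_csSup hSbdd ⟨⟨hcS.1.1.trans hs.1.le, hs.2.le⟩, h⟩)
  have hsub : Ioo c b ⊆ Ioo a b := Ioo_subset_Ioo_left hcS.1.1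
  have hanti : AntitoneOn f (Icc c b) := by
    refine antitoneOn_of_hasDerivWithinAt_nonpos (convex_Icc c b)
      (hf.mono (Icc_subset_Icc_left hcS.1.1)) (f' := f') ?_ ?_ <;> rw [interior_Icc] <;> intro s hs
    · exact (hf' s (hsub hs)).hasDerivWithinAt
    · exact hf'_nonpos s (hsub hs) (hgt s hs)
  exact hb.not_ge ((hanti (left_mem_Icc.2 hcb.le) (right_mem_Icc.2 hcb.le) hcb.le).trans hcS.2)

theorem mul_exp_add_integral_le {u u' ℓ : ℝ → ℝ} {K c A B : ℝ} (hAB : A ≤ B)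
    (hu : ContinuousOn u (Icc A B)) (hu' : ∀ s ∈ Ioo A B, HasDerivAt u (u' s) s)
    (hℓ : Continuous ℓ) (hbound : ∀ s ∈ Ioo A B, c * ℓ s * exp (-(K * s)) - K * u s ≤ u' s) :
    u A * exp (K * A) + c * ∫ s in A..B, ℓ s ≤ u B * exp (K * B) := by
  have hΦ : ∀ s, HasDerivAt (fun s => ∫ r in A..s, ℓ r) (ℓ s) s := fun s =>
    (hℓ.integral_hasStrictDerivAt A s).hasDerivAt
  have hexp : ∀ s, HasDerivAt (fun s => exp (K * s)) (exp (K * s) * K) s := fun s => by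
    simpa using ((hasDerivAt_id s).const_mul K).exp
  have hmono : MonotoneOn (fun s => u s * exp (K * s) - c * ∫ r in A..s, ℓ r) (Icc A B) := by
    refine monotoneOn_of_hasDerivWithinAt_nonneg (convex_Icc A B)
      ((hu.mul (by fun_prop)).sub (continuous_const.mul
        (continuous_iff_continuousAt.2 fun s => (hΦ s).continuousAt)).continuousOn)
      (f' := fun s => u' s * exp (K * s) + u s * (exp (K * s) * K) - c * ℓ s) ?_ ?_
      <;> rw [interior_Icc] <;> intro s hs
    · exact (((hu' s hs).mul (hexp s)).sub ((hΦ s).const_mul c)).hasDerivWithinAt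
    · have h := mul_le_mul_of_nonneg_right (hbound s hs) (exp_pos (K * s)).le
      have he : exp (-(K * s)) * exp (K * s) = 1 := by rw [← exp_add]; simp
      linear_combination h - c * ℓ s * he
  have := hmono (left_mem_Icc.2 hAB) (right_mem_Icc.2 hAB) hAB
  simp only [intervalIntegral.integral_same, mul_zero, sub_zero] at this
  linarith

theorem mul_le_of_mul_exp_le {p q K a t L : ℝ} (hK : 0 ≤ K) (hq : 0 ≤ q) (htL : t ≤ a + L)
    (h : p * exp (K * a) ≤ q * exp (K * t)) : exp (-(K * L)) * p ≤ q :=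
  calc exp (-(K * L)) * p = p * exp (K * a) * exp (-(K * (a + L))) := by
        rw [mul_assoc, ← exp_add]; ring_nf
    _ ≤ q * exp (K * t) * exp (-(K * (a + L))) := by gcongr
    _ = q * exp (K * (t - (a + L))) := by rw [mul_assoc, ← exp_add]; ring_nf
    _ ≤ q := mul_le_of_le_one_right hq (exp_le_one_iff.2 (by nlinarith))

theorem natCast_mul_le_and_le_natCast_mul {u : ℕ → ℝ} {p q : ℝ} (hu0 : u 0 = 0)
    (hgap : ∀ n, p ≤ u (n + 1) - u n ∧ u (n + 1) - u n ≤ q) (n : ℕ) :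
    n * p ≤ u n ∧ u n ≤ n * q := by
  induction n with
  | zero => simp [hu0]
  | succ n ih =>
    push_cast
    constructor <;> linarith [hgap n]

theorem pow_floor_div_le_exp {q P s : ℝ} (hq0 : 0 < q) (hq1 : q ≤ 1) :
    q ^ ⌊s / P⌋₊ ≤ exp (log q * (s / P - 1)) :=
  calc q ^ ⌊s / P⌋₊ = exp (⌊s / P⌋₊ * log q) := by rw [exp_nat_mul, exp_log hq0]
    _ ≤ exp (log q * (s / P - 1)) :=
      exp_le_exp.2 (by nlinarith [Nat.lt_floor_add_one (s / P), log_nonpos hq0.le hq1])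

theorem exists_forall_inner_mem_Icc {ι E : Type*} [Nonempty ι] [NormedAddCommGroup E]
    [InnerProductSpace ℝ E] (y : ι → E) {C : ℝ} (hy : ∀ p q, ‖y p - y q‖ ≤ C) (v : E) :
    ∃ m, ∀ p, ⟪v, y p⟫ ∈ Icc m (m + ‖v‖ * C) := by
  have hclose : ∀ p q, ⟪v, y p⟫ ≤ ⟪v, y q⟫ + ‖v‖ * C := fun p q => by
    have := real_inner_le_norm v (y p - y q)
    rw [inner_sub_right] at this
    linarith [mul_le_mul_of_nonneg_left (hy p q) (norm_nonneg v)]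
  obtain ⟨p₀⟩ := ‹Nonempty ι›
  have hbdd : BddBelow (range fun p => ⟪v, y p⟫) :=
    ⟨⟪v, y p₀⟫ - ‖v‖ * C, by rintro _ ⟨p, rfl⟩; linarith [hclose p₀ p]⟩
  refine ⟨⨅ p, ⟪v, y p⟫, fun p => ⟨ciInf_le hbdd p, ?_⟩⟩
  linarith [le_ciInf fun q => sub_le_iff_le_add.2 (hclose p q)]

theorem exists_forall_norm_le {ι E : Type*} [Finite ι] [NormedAddCommGroup E] {x : ι → ℝ → E}
    {s : Set ℝ} (hs : IsCompact s) (hx : ∀ i, ContinuousOn (x i) s) :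
    ∃ R, ∀ i, ∀ r ∈ s, ‖x i r‖ ≤ R := by
  obtain ⟨R, hR⟩ :=
    (isCompact_iUnion fun i => hs.image_of_continuousOn (hx i)).isBounded.exists_norm_le
  exact ⟨R, fun i r hr => hR _ (mem_iUnion.2 ⟨i, mem_image_of_mem _ hr⟩)⟩

theorem le_iSup_iSup_of_forall_le {α β : Type*} [Nonempty β] {f : α → β → ℝ} {B : ℝ}
    (hB : ∀ a b, f a b ≤ B) (a : α) (b : β) : f a b ≤ ⨆ a, ⨆ b, f a b :=
  (le_ciSup ⟨B, forall_mem_range.2 (hB a)⟩ b).trans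
    (le_ciSup (f := fun a => ⨆ b, f a b) ⟨B, forall_mem_range.2 fun a => ciSup_le (hB a)⟩ a)

structure IsDelayedConsensus {ι E : Type*} [Fintype ι] [NormedAddCommGroup E] [NormedSpace ℝ E]
    (τ : ℝ) (w : ι → ι → ℝ → ℝ) (x : ι → ℝ → E) : Prop where
  continuousOn : ∀ i, ContinuousOn (x i) (Ici (-τ))
  hasDerivAt : ∀ i t, 0 < t → HasDerivAt (x i) (∑ j, w i j t • (x j (t - τ) - x i t)) t
  weight_nonneg : ∀ i j t, 0 ≤ w i j t

def HistoryDiamLE {ι E : Type*} [NormedAddCommGroup E] (x : ι → ℝ → E) (τ a C : ℝ) : Prop :=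
  ∀ i j, ∀ s ∈ Icc (a - τ) a, ∀ t ∈ Icc (a - τ) a, ‖x i s - x j t‖ ≤ C

theorem historyDiamLE_zero_iSup {ι E : Type*} [Finite ι] [NormedAddCommGroup E]
    {x : ι → ℝ → E} {τ : ℝ} (hτ : 0 ≤ τ) (hx : ∀ i, ContinuousOn (x i) (Icc (-τ) 0)) :
    HistoryDiamLE x τ 0 (⨆ i, ⨆ j, ⨆ r : Icc (-τ) (0 : ℝ), ⨆ s : Icc (-τ) (0 : ℝ),
      ‖x i r - x j s‖) := by
  obtain ⟨R, hR⟩ := exists_forall_norm_le isCompact_Icc hx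
  have : Nonempty (Icc (-τ) (0 : ℝ)) := ⟨⟨0, by linarith, le_rfl⟩⟩
  have hbound : ∀ i j (r s : Icc (-τ) (0 : ℝ)), ‖x i r - x j s‖ ≤ R + R := fun i j r s =>
    (norm_sub_le _ _).trans (add_le_add (hR i r r.2) (hR j s s.2))
  intro i j r hr s hs
  rw [zero_sub] at hr hs
  have : Nonempty ι := ⟨i⟩
  exact (le_iSup_iSup_of_forall_le (hbound i j) ⟨r, hr⟩ ⟨s, hs⟩).trans
    (le_iSup_iSup_of_forall_le (fun i j => ciSup_le fun r => ciSup_le (hbound i j r)) i j)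

namespace IsDelayedConsensus

variable {ι E : Type*} [Fintype ι] [NormedAddCommGroup E] {τ : ℝ} {w : ι → ι → ℝ → ℝ}

theorem neg [NormedSpace ℝ E] {x : ι → ℝ → E} (hx : IsDelayedConsensus τ w x) :
    IsDelayedConsensus τ w (fun i t => -x i t) where
  continuousOn i := (hx.continuousOn i).neg
  hasDerivAt i t ht := by
    refine (hx.hasDerivAt i t ht).neg.congr_deriv ?_
    rw [← Finset.sum_neg_distrib]
    exact Finset.sum_congr rfl fun j _ => by rw [← smul_neg, neg_sub, neg_sub_neg]
  weight_nonneg := hx.weight_nonneg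

theorem inner [InnerProductSpace ℝ E] {x : ι → ℝ → E} (hx : IsDelayedConsensus τ w x) (v : E) :
    IsDelayedConsensus τ w (fun i t => ⟪v, x i t⟫) where
  continuousOn i := continuousOn_const.inner (hx.continuousOn i)
  hasDerivAt i t ht := by
    refine ((hasDerivAt_const t v).inner ℝ (hx.hasDerivAt i t ht)).congr_deriv ?_
    simp [inner_sum, inner_smul_right, inner_sub_right]
  weight_nonneg := hx.weight_nonneg

theorem nonneg_of_sum_weight_le [NormedSpace ℝ E] {x : ι → ℝ → E} {K : ℝ}
    (hx : IsDelayedConsensus τ w x) (hK : ∀ i t, ∑ j, w i j t ≤ K) (i : ι) : 0 ≤ K :=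
  (Finset.sum_nonneg fun j _ => hx.weight_nonneg i j 0).trans (hK i 0)

section Scalar

variable {g : ι → ℝ → ℝ} {a m M K : ℝ} {ℓ : ℝ → ℝ} {A B L lam : ℝ}

theorem continuousOn_Icc (hg : IsDelayedConsensus τ w g) (i : ι) {s t : ℝ} (hs : -τ ≤ s) :
    ContinuousOn (g i) (Icc s t) :=
  (hg.continuousOn i).mono fun _ hr => hs.trans hr.1

theorem le_of_history_le (hg : IsDelayedConsensus τ w g) (hτ : 0 < τ) (ha : 0 ≤ a)
    (hM : ∀ j, ∀ s ∈ Icc (a - τ) a, g j s ≤ M) (i : ι) {t : ℝ} (ht : a - τ ≤ t) : g i t ≤ M := by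
  suffices h : ∀ k : ℕ, ∀ i, ∀ t ∈ Icc (a - τ) (a + k * τ), g i t ≤ M by
    obtain ⟨k, hk⟩ := exists_nat_ge ((t - a) / τ)
    exact h k i t ⟨ht, by rw [div_le_iff₀ hτ] at hk; linarith⟩
  intro k
  induction k with
  | zero => simpa using hM
  | succ k ih =>
    rintro i t ⟨ht, htk⟩
    rcases le_or_gt t (a + k * τ) with h | h
    · exact ih i t ⟨ht, h⟩
    have hk : 0 ≤ (k : ℝ) * τ := by positivity
    push_cast at htk
    refine le_of_hasDerivAt_nonpos_of_lt h.le
      ((hg.continuousOn i).mono fun s hs => by simp only [mem_Ici]; linarith [hs.1])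
      (fun s hs => hg.hasDerivAt i s (by linarith [hs.1])) (fun s hs hMs => ?_)
      (ih i _ ⟨by linarith, le_rfl⟩)
    -- the delayed states are still below `M`, the current one is above it
    refine Finset.sum_nonpos fun j _ => mul_nonpos_of_nonneg_of_nonpos (hg.weight_nonneg i j s) ?_
    linarith [ih j (s - τ) ⟨by linarith [hs.1], by linarith [hs.2]⟩]

theorem le_of_le_history (hg : IsDelayedConsensus τ w g) (hτ : 0 < τ) (ha : 0 ≤ a)
    (hm : ∀ j, ∀ s ∈ Icc (a - τ) a, m ≤ g j s) (i : ι) {t : ℝ} (ht : a - τ ≤ t) : m ≤ g i t :=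
  neg_le_neg_iff.1 <| hg.neg.le_of_history_le hτ ha (fun j s hs => neg_le_neg (hm j s hs)) i ht

theorem sub_mul_le_deriv (hg : IsDelayedConsensus τ w g) (hτ : 0 < τ) (ha : 0 ≤ a)
    (hK : ∀ i t, ∑ j, w i j t ≤ K) (hm : ∀ j, ∀ s ∈ Icc (a - τ) a, m ≤ g j s) (i j : ι) {s : ℝ}
    (hs : a ≤ s) :
    w i j s * (g j (s - τ) - m) - K * (g i s - m) ≤ ∑ k, w i k s • (g k (s - τ) - g i s) := by
  have hlow : ∀ k, m ≤ g k (s - τ) := fun k => hg.le_of_le_history hτ ha hm k (by linarith)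
  calc w i j s * (g j (s - τ) - m) - K * (g i s - m)
      ≤ ∑ k, w i k s * (g k (s - τ) - m) - (∑ k, w i k s) * (g i s - m) := by
        refine sub_le_sub (Finset.single_le_sum (f := fun k => w i k s * (g k (s - τ) - m))
          (fun k _ => mul_nonneg (hg.weight_nonneg i k s) (sub_nonneg.2 (hlow k)))
          (Finset.mem_univ j)) (mul_le_mul_of_nonneg_right (hK i s) ?_)
        exact sub_nonneg.2 (hg.le_of_le_history hτ ha hm i (by linarith))
    _ = ∑ k, w i k s • (g k (s - τ) - g i s) := by
        rw [Finset.sum_mul, ← Finset.sum_sub_distrib]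
        exact Finset.sum_congr rfl fun k _ => by rw [smul_eq_mul]; ring

theorem sub_mul_exp_le (hg : IsDelayedConsensus τ w g) (hτ : 0 < τ) (ha : 0 ≤ a)
    (hK : ∀ i t, ∑ j, w i j t ≤ K) (hm : ∀ j, ∀ s ∈ Icc (a - τ) a, m ≤ g j s) (i : ι) {t : ℝ}
    (ht : a ≤ t) : (g i a - m) * exp (K * a) ≤ (g i t - m) * exp (K * t) := by
  have h := mul_exp_add_integral_le (c := 0) (ℓ := 0) (u := fun s => g i s - m) ht
    ((hg.continuousOn_Icc i (by linarith)).sub continuousOn_const)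
    (fun s hs => (hg.hasDerivAt i s (by linarith [hs.1])).sub_const m) continuous_const
    (fun s hs => by
      have hw := mul_nonneg (hg.weight_nonneg i i s)
        (sub_nonneg.2 (hg.le_of_le_history hτ ha hm i (by linarith [hs.1] : a - τ ≤ s - τ)))
      have := hg.sub_mul_le_deriv hτ ha hK hm i i hs.1.le
      simp only [Pi.zero_apply, mul_zero, zero_mul, zero_sub]
      linarith)
  simpa using h

theorem mul_sub_mul_exp_le (hg : IsDelayedConsensus τ w g) (hτ : 0 < τ) (ha : 0 ≤ a)
    (hK : ∀ i t, ∑ j, w i j t ≤ K) (hm : ∀ j, ∀ s ∈ Icc (a - τ) a, m ≤ g j s)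
    (hℓ : Continuous ℓ) (hℓ_nonneg : ∀ s, 0 ≤ ℓ s)
    (hℓw : ∀ i j, i ≠ j → ∀ s, 0 < s → ℓ s ≤ w i j s) (haA : a + τ ≤ A) (hAB : A ≤ B)
    (hlam_le_one : lam ≤ 1) (hlam : lam ≤ ∫ s in A..B, ℓ s) (j₀ i : ι) {t : ℝ} (ht : B ≤ t) :
    lam * ((g j₀ a - m) * exp (K * a)) ≤ (g i t - m) * exp (K * t) := by
  have hK0 := hg.nonneg_of_sum_weight_le hK i
  have hp : 0 ≤ (g j₀ a - m) * exp (K * a) :=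
    mul_nonneg (sub_nonneg.2 (hm j₀ a ⟨by linarith, le_rfl⟩)) (exp_pos _).le
  obtain rfl | hij := eq_or_ne i j₀
  · exact (mul_le_of_le_one_left hp hlam_le_one).trans
      (hg.sub_mul_exp_le hτ ha hK hm i (by linarith))
  -- `j₀` keeps a fixed fraction of its initial excess over `m`, and `i` feels it through `ℓ`
  have hdelayed : ∀ s ∈ Ioo A t,
      ℓ s * ((g j₀ a - m) * exp (K * a) * exp (-(K * s))) ≤ w i j₀ s * (g j₀ (s - τ) - m) := by
    intro s hs
    have hmem := hg.sub_mul_exp_le hτ ha hK hm j₀ (t := s - τ) (by linarith [hs.1])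
    have hexp : exp (-(K * s)) * exp (K * (s - τ)) ≤ 1 := by
      rw [← exp_add, exp_le_one_iff]; nlinarith
    refine mul_le_mul (hℓw i j₀ hij s (by linarith [hs.1])) ?_ (by positivity)
      (hg.weight_nonneg i j₀ s)
    nlinarith [mul_le_mul_of_nonneg_left hmem (exp_pos (-(K * s))).le,
      sub_nonneg.2 (hg.le_of_le_history hτ ha hm j₀ (by linarith [hs.1] : a - τ ≤ s - τ))]
  have h := mul_exp_add_integral_le (K := K) (c := (g j₀ a - m) * exp (K * a))
    (u := fun s => g i s - m) (hAB.trans ht) ((hg.continuousOn_Icc i (by linarith)).sub continuousOn_const)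
    (fun s hs => (hg.hasDerivAt i s (by linarith [hs.1])).sub_const m) hℓ
    (fun s hs => by
      have := hg.sub_mul_le_deriv hτ ha hK hm i j₀ (s := s) (by linarith [hs.1])
      linarith [hdelayed s hs])
  have hint : lam ≤ ∫ s in A..t, ℓ s := hlam.trans
    (intervalIntegral.integral_mono_interval le_rfl hAB ht
      (Filter.Eventually.of_forall hℓ_nonneg) (hℓ.intervalIntegrable A t))
  have hA : 0 ≤ (g i A - m) * exp (K * A) :=
    mul_nonneg (sub_nonneg.2 (hg.le_of_le_history hτ ha hm i (by linarith))) (exp_pos _).le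
  nlinarith [mul_le_mul_of_nonneg_left hint hp]

theorem sub_le_of_history_mem_Icc (hg : IsDelayedConsensus τ w g) (hτ : 0 < τ) (ha : 0 ≤ a)
    (hK : ∀ i t, ∑ j, w i j t ≤ K) (hgm : ∀ j, ∀ s ∈ Icc (a - τ) a, g j s ∈ Icc m M)
    (hℓ : Continuous ℓ) (hℓ_nonneg : ∀ s, 0 ≤ ℓ s)
    (hℓw : ∀ i j, i ≠ j → ∀ s, 0 < s → ℓ s ≤ w i j s) (haA : a + τ ≤ A) (hAB : A ≤ B)
    (hlam_le_one : lam ≤ 1) (hlam : lam ≤ ∫ s in A..B, ℓ s) (i i' : ι) {t t' : ℝ}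
    (ht : t ∈ Icc B (a + L)) (ht' : t' ∈ Icc B (a + L)) :
    g i t - g i' t' ≤ (1 - lam * exp (-(K * L))) * (M - m) := by
  have hK0 := hg.nonneg_of_sum_weight_le hK i
  have hlow := hg.mul_sub_mul_exp_le hτ ha hK (fun j s hs => (hgm j s hs).1) hℓ hℓ_nonneg hℓw
    haA hAB hlam_le_one hlam i i' ht'.1
  have hupp := hg.neg.mul_sub_mul_exp_le hτ ha hK (m := -M)
    (fun j s hs => neg_le_neg (hgm j s hs).2) hℓ hℓ_nonneg hℓw haA hAB hlam_le_one hlam i i ht.1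
  -- both bounds are anchored at the same agent `i`, so the terms in `g i a` cancel
  rw [← mul_assoc] at hlow hupp
  have h1 := mul_le_of_mul_exp_le hK0
    (sub_nonneg.2 (hg.le_of_le_history hτ ha (fun j s hs => (hgm j s hs).1) i' (t := t')
      (by linarith [ht'.1, hAB]))) ht'.2 hlow
  have h2 := mul_le_of_mul_exp_le hK0
    (sub_nonneg.2 (neg_le_neg (hg.le_of_history_le hτ ha (fun j s hs => (hgm j s hs).2) i (t := t)
      (by linarith [ht.1, hAB])))) ht.2 hupp
  linarith

end Scalar

section InnerProduct

variable [InnerProductSpace ℝ E] {x : ι → ℝ → E} {a C K T lam C₀ : ℝ} {ℓ : ℝ → ℝ} {u : ℕ → ℝ}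

theorem norm_sub_le_of_history (hx : IsDelayedConsensus τ w x) (hτ : 0 < τ) (ha : 0 ≤ a) (c : E)
    {R : ℝ} (hR : ∀ j, ∀ s ∈ Icc (a - τ) a, ‖x j s - c‖ ≤ R) (i : ι) {t : ℝ} (ht : a - τ ≤ t) :
    ‖x i t - c‖ ≤ R := by
  set v := x i t - c
  have hhist : ∀ j, ∀ s ∈ Icc (a - τ) a, ⟪v, x j s⟫ ≤ ⟪v, c⟫ + ‖v‖ * R := fun j s hs => by
    have := real_inner_le_norm v (x j s - c)
    rw [inner_sub_right] at this
    linarith [mul_le_mul_of_nonneg_left (hR j s hs) (norm_nonneg v)]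
  have hvv : ‖v‖ ^ 2 = ⟪v, x i t⟫ - ⟪v, c⟫ := by
    rw [← real_inner_self_eq_norm_sq, ← inner_sub_right]
  have hR0 : 0 ≤ R := (norm_nonneg _).trans (hR i a ⟨by linarith, le_rfl⟩)
  nlinarith [(hx.inner v).le_of_history_le hτ ha hhist i ht, norm_nonneg v]

theorem norm_sub_le_of_historyDiamLE (hx : IsDelayedConsensus τ w x) (hτ : 0 < τ) (ha : 0 ≤ a)
    (hC : HistoryDiamLE x τ a C) (i j : ι) {s t : ℝ} (hs : a - τ ≤ s) (ht : a - τ ≤ t) :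
    ‖x i s - x j t‖ ≤ C := by
  have hi : ∀ k, ∀ r ∈ Icc (a - τ) a, ‖x k r - x i s‖ ≤ C := fun k r hr => by
    rw [norm_sub_rev]
    exact hx.norm_sub_le_of_history hτ ha (x k r) (fun j s' hs' => hC j k s' hs' r hr) i hs
  rw [norm_sub_rev]
  exact hx.norm_sub_le_of_history hτ ha (x i s) hi j ht

theorem historyDiamLE_contract {A B b L : ℝ}
    (hx : IsDelayedConsensus τ w x) (hτ : 0 < τ) (ha : 0 ≤ a) (hK : ∀ i t, ∑ j, w i j t ≤ K)
    (hℓ : Continuous ℓ) (hℓ_nonneg : ∀ s, 0 ≤ ℓ s)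
    (hℓw : ∀ i j, i ≠ j → ∀ s, 0 < s → ℓ s ≤ w i j s) (haA : a + τ ≤ A) (hAB : A ≤ B)
    (hBb : B ≤ b - τ) (hbL : b ≤ a + L) (hlam_le_one : lam ≤ 1) (hlam : lam ≤ ∫ s in A..B, ℓ s)
    (hC : HistoryDiamLE x τ a C) :
    HistoryDiamLE x τ b ((1 - lam * exp (-(K * L))) * C) := by
  intro i j s hs t ht
  set v := x i s - x j t
  have : Nonempty (ι × Icc (a - τ) a) := ⟨(i, ⟨a, by linarith, le_rfl⟩)⟩
  obtain ⟨m, hm⟩ := exists_forall_inner_mem_Icc (fun p : ι × Icc (a - τ) a => x p.1 p.2)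
    (fun p q => hC _ _ _ p.2.2 _ q.2.2) v
  have hosc := (hx.inner v).sub_le_of_history_mem_Icc hτ ha hK (fun k r hr => hm (k, ⟨r, hr⟩))
    hℓ hℓ_nonneg hℓw haA hAB hlam_le_one hlam i j (L := L) (t := s) (t' := t)
    ⟨by linarith [hs.1], by linarith [hs.2]⟩ ⟨by linarith [ht.1], by linarith [ht.2]⟩
  have hvv : ‖v‖ ^ 2 = ⟪v, x i s⟫ - ⟪v, x j t⟫ := by
    rw [← real_inner_self_eq_norm_sq, ← inner_sub_right]
  have hK0 := hx.nonneg_of_sum_weight_le hK i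
  have hcontr : 0 ≤ 1 - lam * exp (-(K * L)) := sub_nonneg.2 <| mul_le_one₀ hlam_le_one
    (exp_pos _).le (exp_le_one_iff.2 (neg_nonpos.2 (mul_nonneg hK0 (by linarith [hs.1]))))
  have hC0 : 0 ≤ C := (norm_nonneg _).trans (hC i i a ⟨by linarith, le_rfl⟩ a ⟨by linarith, le_rfl⟩)
  nlinarith [norm_nonneg v, mul_nonneg hcontr hC0]

theorem historyDiamLE_geometric (hx : IsDelayedConsensus τ w x) (hτ : 0 < τ)
    (hK : ∀ i t, ∑ j, w i j t ≤ K) (hℓ : Continuous ℓ) (hℓ_nonneg : ∀ s, 0 ≤ ℓ s)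
    (hℓw : ∀ i j, i ≠ j → ∀ s, 0 < s → ℓ s ≤ w i j s) (hu0 : u 0 = 0)
    (hgap : ∀ n, τ ≤ u (n + 1) - u n ∧ u (n + 1) - u n ≤ T) (hlam_le_one : lam ≤ 1)
    (hlam : ∀ n, lam ≤ ∫ s in u n..u (n + 1), ℓ s) (hC₀ : HistoryDiamLE x τ 0 C₀) (k : ℕ) :
    HistoryDiamLE x τ (u (3 * k)) (C₀ * (1 - lam * exp (-(K * (3 * T)))) ^ k) := by
  induction k with
  | zero => simpa [hu0] using hC₀
  | succ k ih =>
    have g1 := hgap (3 * k)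
    have g2 := hgap (3 * k + 1)
    have g3 := hgap (3 * k + 2)
    rw [show 3 * k + 1 + 1 = 3 * k + 2 from rfl] at g2
    rw [show 3 * k + 2 + 1 = 3 * (k + 1) from rfl] at g3
    have ha : 0 ≤ u (3 * k) :=
      (mul_nonneg (Nat.cast_nonneg _) hτ.le).trans (natCast_mul_le_and_le_natCast_mul hu0 hgap _).1
    rw [pow_succ, ← mul_assoc, mul_comm _ (1 - _)]
    exact hx.historyDiamLE_contract hτ ha hK hℓ hℓ_nonneg hℓw (by linarith) (by linarith)
      (by linarith) (by linarith) hlam_le_one (hlam (3 * k + 1)) ih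

theorem norm_sub_le_exp (hx : IsDelayedConsensus τ w x) (hτ : 0 < τ) (hu0 : u 0 = 0)
    (hgap : ∀ n, τ ≤ u (n + 1) - u n ∧ u (n + 1) - u n ≤ T) (hT : 0 < T) {q : ℝ} (hq0 : 0 < q)
    (hq1 : q ≤ 1) (hgeom : ∀ k, HistoryDiamLE x τ (u (3 * k)) (C₀ * q ^ k)) (i j : ι) {t : ℝ}
    (ht : 0 ≤ t) : ‖x i t - x j t‖ ≤ C₀ * exp (log q / (3 * T) * (t - 3 * T + τ)) := by
  set k := ⌊(t + τ) / (3 * T)⌋₊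
  have hk : (k : ℝ) * (3 * T) ≤ t + τ :=
    (le_div_iff₀ (by positivity)).1 (Nat.floor_le (by positivity))
  have hu := natCast_mul_le_and_le_natCast_mul hu0 hgap (3 * k)
  push_cast at hu
  have hC₀ : 0 ≤ C₀ := by
    simpa using (norm_nonneg _).trans (hgeom 0 i i 0 ⟨by simp [hu0, hτ.le], by simp [hu0]⟩
      0 ⟨by simp [hu0, hτ.le], by simp [hu0]⟩)
  have htk : u (3 * k) - τ ≤ t := by nlinarith
  calc ‖x i t - x j t‖ ≤ C₀ * q ^ k :=
        hx.norm_sub_le_of_historyDiamLE hτ (by nlinarith) (hgeom k) i j htk htk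
    _ ≤ C₀ * exp (log q * ((t + τ) / (3 * T) - 1)) :=
        mul_le_mul_of_nonneg_left (pow_floor_div_le_exp hq0 hq1) hC₀
    _ = C₀ * exp (log q / (3 * T) * (t - 3 * T + τ)) := by
        congr 2; field_simp; ring

end InnerProduct

end IsDelayedConsensus

/-- The diagonal weight vanishes, so the sum over all `j` is the Hegselmann-Krause sum over
`j ≠ i`. -/
noncomputable def hkWeight {E : Type*} (N : ℕ) (τ : ℝ) (ψ : E → E → ℝ) (α : ℝ → ℝ)
    (x : Fin N → ℝ → E) (i j : Fin N) (t : ℝ) : ℝ :=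
  if j = i then 0 else α t / (N - 1) * ψ (x i t) (x j (t - τ))

section HegselmannKrause

variable {E : Type*} {N : ℕ} {τ : ℝ} {ψ : E → E → ℝ} {α : ℝ → ℝ} {x : Fin N → ℝ → E}

theorem isDelayedConsensus_hkWeight [NormedAddCommGroup E] [NormedSpace ℝ E]
    (hψ : ∀ y z, 0 < ψ y z) (hα : ∀ t, 0 ≤ α t) (hx : ∀ i, ContinuousOn (x i) (Ici (-τ)))
    (hode : ∀ i t, 0 < t → HasDerivAt (x i)
      ((α t / ((N : ℝ) - 1)) •
        ∑ j ∈ Finset.univ.filter (fun j => j ≠ i),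
          ψ (x i t) (x j (t - τ)) • (x j (t - τ) - x i t)) t) :
    IsDelayedConsensus τ (hkWeight N τ ψ α x) x where
  continuousOn := hx
  hasDerivAt i t ht := by
    refine (hode i t ht).congr_deriv ?_
    simp only [hkWeight, Finset.sum_filter, Finset.smul_sum, ite_smul, zero_smul, smul_ite,
      smul_zero, mul_smul, ite_not]
  weight_nonneg i j t := by
    unfold hkWeight
    split_ifs
    · exact le_rfl
    · exact mul_nonneg (div_nonneg (hα t) (sub_nonneg.2 (by exact_mod_cast i.pos)))
        (hψ _ _).le

theorem sum_hkWeight_le {K : ℝ} (hψK : ∀ y z, ψ y z ≤ K) (hK : 0 ≤ K)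
    (hα : ∀ t, α t ∈ Icc (0 : ℝ) 1) (i : Fin N) (t : ℝ) : ∑ j, hkWeight N τ ψ α x i j t ≤ K := by
  have hN : (1 : ℝ) ≤ N := by exact_mod_cast i.pos
  calc ∑ j, hkWeight N τ ψ α x i j t ≤ ∑ j, if j = i then 0 else α t / (N - 1) * K := by
        refine Finset.sum_le_sum fun j _ => ?_
        unfold hkWeight
        split_ifs
        · exact le_rfl
        · exact mul_le_mul_of_nonneg_left (hψK _ _) (div_nonneg (hα t).1 (by linarith))
    _ = (N - 1) * (α t / (N - 1)) * K := by
        simp only [Finset.sum_ite, Finset.sum_const_zero, Finset.filter_ne', Finset.sum_const,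
          Finset.mem_univ, Finset.card_erase_of_mem, Finset.card_univ, Fintype.card_fin,
          nsmul_eq_mul, Nat.cast_sub (Nat.one_le_cast.1 hN), Nat.cast_one, zero_add]
        ring
    _ ≤ K := by
        rcases hN.eq_or_lt with h | h
        · simp [← h, hK]
        · rw [mul_div_cancel₀ _ (by linarith)]
          exact mul_le_of_le_one_left hK (hα t).2

theorem hkWeight_ge {ψ₀ : ℝ} (hα : ∀ t, 0 ≤ α t) {i j : Fin N} (hij : i ≠ j) {t : ℝ}
    (hψ₀ : ψ₀ ≤ ψ (x i t) (x j (t - τ))) : ψ₀ / (N - 1) * α t ≤ hkWeight N τ ψ α x i j t := by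
  rw [hkWeight, if_neg hij.symm, div_mul_eq_mul_div, mul_comm ψ₀, mul_div_right_comm]
  exact mul_le_mul_of_nonneg_left hψ₀ (div_nonneg (hα t) (sub_nonneg.2 (by exact_mod_cast i.pos)))

theorem IsDelayedConsensus.exists_pos_le_hkWeight [NormedAddCommGroup E] [InnerProductSpace ℝ E]
    [ProperSpace E] (hx : IsDelayedConsensus τ (hkWeight N τ ψ α x) x) (hτ : 0 < τ)
    (hψ : ∀ y z, 0 < ψ y z) (hψc : Continuous fun p : E × E => ψ p.1 p.2) (hα : ∀ t, 0 ≤ α t) :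
    ∃ ψ₀ > 0, ∀ i j, i ≠ j → ∀ s, 0 < s → ψ₀ / (N - 1) * α s ≤ hkWeight N τ ψ α x i j s := by
  obtain ⟨R, hR⟩ := exists_forall_norm_le isCompact_Icc fun i =>
    (hx.continuousOn i).mono Icc_subset_Ici_self
  have hball : ∀ i t, -τ ≤ t → x i t ∈ Metric.closedBall 0 R := fun i t ht => by
    simpa using hx.norm_sub_le_of_history hτ le_rfl 0
      (fun j s hs => by simpa using hR j s (by simpa using hs)) i (by simpa using ht)
  obtain ⟨ψ₀, hψ₀, hψ₀le⟩ := ((isCompact_closedBall (0 : E) R).prod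
    (isCompact_closedBall (0 : E) R)).exists_forall_le' hψc.continuousOn fun p _ => hψ p.1 p.2
  exact ⟨ψ₀, hψ₀, fun i j hij s hs => hkWeight_ge hα hij
    (hψ₀le (x i s, x j (s - τ)) ⟨hball i s (by linarith), hball j (s - τ) (by linarith)⟩)⟩

end HegselmannKrause

theorem hk_delay_exponential_consensus_general
    {dim N : ℕ} (hN : 2 ≤ N) (τ : ℝ) (hτ : 0 < τ)
    (ψ : EuclideanSpace ℝ (Fin dim) → EuclideanSpace ℝ (Fin dim) → ℝ)
    (hψpos : ∀ y z, 0 < ψ y z)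
    (hψbdd : ∃ K, ∀ y z, ψ y z ≤ K)
    (hψcont : Continuous fun p : EuclideanSpace ℝ (Fin dim) × EuclideanSpace ℝ (Fin dim) => ψ p.1 p.2)
    (α : ℝ → ℝ) (hαcont : Continuous α) (hα01 : ∀ t, α t ∈ Set.Icc (0:ℝ) 1)
    (x : Fin N → ℝ → EuclideanSpace ℝ (Fin dim))
    (hxcont : ∀ i, ContinuousOn (x i) (Set.Ici (-τ)))
    (hode : ∀ i t, 0 < t → HasDerivAt (x i)
      ((α t / ((N : ℝ) - 1)) •
        ∑ j ∈ Finset.univ.filter (fun j => j ≠ i),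
          ψ (x i t) (x j (t - τ)) • (x j (t - τ) - x i t)) t)
    (T abar : ℝ) (hT : 0 < T) (habar : 0 < abar)
    (tseq : ℕ → ℝ) (ht0 : tseq 0 = 0)
    (hgap : ∀ n : ℕ, τ ≤ tseq (n + 1) - tseq n ∧ tseq (n + 1) - tseq n ≤ T)
    (hint : ∀ n : ℕ, abar ≤ ∫ t in (tseq n)..(tseq (n + 1)), α t)
    (diam : ℝ → ℝ) (hdiam : ∀ t, diam t = ⨆ i, ⨆ j, ‖x i t - x j t‖)
    (D0 : ℝ)
    (hD0 : D0 = ⨆ i, ⨆ j, ⨆ r : Set.Icc (-τ) (0:ℝ), ⨆ s : Set.Icc (-τ) (0:ℝ),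
      ‖x i (r : ℝ) - x j (s : ℝ)‖) :
    ∃ γ : ℝ, 0 < γ ∧ ∀ t : ℝ, 0 ≤ t →
      diam t ≤ D0 * Real.exp (-γ * (t - 3 * T + τ)) := by
  obtain ⟨K, hK⟩ := hψbdd
  subst hD0
  have hK0 : 0 < K := (hψpos 0 0).trans_le (hK 0 0)
  have hN1 : (0 : ℝ) < N - 1 := by
    have : (2 : ℝ) ≤ N := by exact_mod_cast hN
    linarith
  have hα0 : ∀ t, 0 ≤ α t := fun t => (hα01 t).1
  have hx := isDelayedConsensus_hkWeight hψpos hα0 hxcont hode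
  obtain ⟨ψ₀, hψ₀, hψ₀w⟩ := hx.exists_pos_le_hkWeight hτ hψpos hψcont hα0
  set lam := min 1 (ψ₀ * abar / (N - 1))
  have hlam : 0 < lam := lt_min one_pos (by positivity)
  have hgeom := hx.historyDiamLE_geometric hτ (sum_hkWeight_le hK hK0.le hα01) (by fun_prop)
    (fun s => mul_nonneg (div_nonneg hψ₀.le hN1.le) (hα0 s)) hψ₀w ht0 hgap (min_le_left _ _)
    (fun n => (min_le_right 1 (ψ₀ * abar / (N - 1))).trans (by
      rw [intervalIntegral.integral_const_mul, mul_div_right_comm]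
      exact mul_le_mul_of_nonneg_left (hint n) (div_nonneg hψ₀.le hN1.le)))
    (historyDiamLE_zero_iSup hτ.le fun i => (hxcont i).mono Icc_subset_Ici_self)
  set q := 1 - lam * exp (-(K * (3 * T)))
  have hexp : exp (-(K * (3 * T))) < 1 := exp_lt_one_iff.2 (by nlinarith)
  have hq0 : 0 < q := by nlinarith [min_le_left 1 (ψ₀ * abar / (N - 1))]
  have hq1 : q < 1 := by nlinarith [exp_pos (-(K * (3 * T)))]
  refine ⟨-log q / (3 * T), div_pos (neg_pos.2 (log_neg hq0 hq1)) (by positivity), fun t ht => ?_⟩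
  have : Nonempty (Fin N) := ⟨⟨0, by omega⟩⟩
  rw [hdiam, neg_div, neg_neg]
  exact ciSup_le fun i => ciSup_le fun j =>
    hx.norm_sub_le_exp hτ ht0 hgap hT hq0 hq1.le hgeom i j ht

/-- exponential convergence to consensus for the delayed weighted
Hegselmann-Krause system under (WF), with no smallness condition on the delay. -/
theorem hk_delay_exponential_consensus
    {dim N : ℕ} (hN : 2 ≤ N) (τ : ℝ) (hτ : 0 < τ)
    (ψ : EuclideanSpace ℝ (Fin dim) → EuclideanSpace ℝ (Fin dim) → ℝ)
    (hψpos : ∀ y z, 0 < ψ y z)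
    (hψbdd : ∃ K, ∀ y z, ψ y z ≤ K)
    (hψcont : Continuous fun p : EuclideanSpace ℝ (Fin dim) × EuclideanSpace ℝ (Fin dim) => ψ p.1 p.2)
    (α : ℝ → ℝ) (hαcont : Continuous α) (hα01 : ∀ t, α t ∈ Set.Icc (0:ℝ) 1)
    (x : Fin N → ℝ → EuclideanSpace ℝ (Fin dim))
    (hxcont : ∀ i, ContinuousOn (x i) (Set.Ici (-τ)))
    (hode : ∀ i t, 0 < t → HasDerivAt (x i)
      ((α t / ((N : ℝ) - 1)) •
        ∑ j ∈ Finset.univ.filter (fun j => j ≠ i),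
          ψ (x i t) (x j (t - τ)) • (x j (t - τ) - x i t)) t)
    (T abar : ℝ) (hT : 0 < T) (habar : 0 < abar)
    (tseq : ℕ → ℝ) (ht0 : tseq 0 = 0) (htmono : StrictMono tseq)
    (hgap : ∀ n : ℕ, τ ≤ tseq (n + 1) - tseq n ∧ tseq (n + 1) - tseq n ≤ T)
    (hint : ∀ n : ℕ, abar ≤ ∫ t in (tseq n)..(tseq (n + 1)), α t)
    (diam : ℝ → ℝ) (hdiam : ∀ t, diam t = ⨆ i, ⨆ j, ‖x i t - x j t‖)
    (D0 : ℝ)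
    (hD0 : D0 = ⨆ i, ⨆ j, ⨆ r : Set.Icc (-τ) (0:ℝ), ⨆ s : Set.Icc (-τ) (0:ℝ),
      ‖x i (r : ℝ) - x j (s : ℝ)‖) :
    ∃ γ : ℝ, 0 < γ ∧ ∀ t : ℝ, 0 ≤ t →
      diam t ≤ D0 * Real.exp (-γ * (t - 3 * T + τ)) :=
  hk_delay_exponential_consensus_general hN τ hτ ψ hψpos hψbdd hψcont α hαcont hα01 x hxcont hode T
    abar hT habar tseq ht0 hgap hint diam hdiam D0 hD0
end

section
/- Let u : [t_{n−1}, t_n] → ℝ be differentiable and satisfy u'(t) ≤ (K − ψ_0 α(t)) Δ − K u(t) for all t, where K, ψ_0, Δ ≥ 0 and α : [t_{n−1}, t_n] → [0,1] is continuous with ∫_{t_{n−1}}^{t_n} α(s) ds ≥ ᾱ and t_n − t_{n−1} ≤ T. Then u(t_n) ≤ e^{−K(t_n − t_{n−1})} u(t_{n−1}) + (1 − ψ_0 e^{−KT} ᾱ − e^{−K(t_n−t_{n−1})}) Δ; in particular, if u(t_{n−1}) ≤ Δ then u(t_n) ≤ (1 − ψ_0 e^{−KT} ᾱ) Δ. 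-/
/-!
Multiplying by the integrating factor `exp (-K (b - t))` turns the differential inequality for
`v = u - Δ` into Duhamel's formula as an inequality,
`v b ≤ exp (-K (b - a)) v a - ψ₀ Δ ∫ exp (-K (b - s)) α s ds`.
On `[a, b]` the weight `exp (-K (b - s))` is at least `exp (-K T)`, so the forcing term gains at
least `ψ₀ Δ exp (-K T) ᾱ`.
-/

open MeasureTheory Set Real

theorem le_exp_mul_add_integral_of_deriv_le {K a b : ℝ} {v v' f : ℝ → ℝ} (hab : a ≤ b)
    (hcont : ContinuousOn v (Icc a b)) (hv : ∀ t ∈ Ioo a b, HasDerivAt v (v' t) t)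
    (hf : IntegrableOn f (Icc a b)) (hle : ∀ t ∈ Ioo a b, v' t ≤ f t - K * v t) :
    v b ≤ exp (-K * (b - a)) * v a + ∫ s in a..b, exp (-K * (b - s)) * f s := by
  have hweight : ∀ t, HasDerivAt (fun t => exp (-K * (b - t))) (exp (-K * (b - t)) * K) t :=
    fun t => by simpa using (((hasDerivAt_id t).const_sub b).const_mul (-K)).exp
  have hcont_weight : Continuous fun t => exp (-K * (b - t)) := by fun_prop
  have key := intervalIntegral.sub_le_integral_of_hasDeriv_right_of_le hab
    (hcont_weight.continuousOn.mul hcont)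
    (fun t ht => ((hweight t).mul (hv t ht)).hasDerivWithinAt)
    (hf.continuousOn_mul hcont_weight.continuousOn isCompact_Icc)
    (fun t ht => by
      have := mul_le_mul_of_nonneg_left (hle t ht) (exp_pos (-K * (b - t))).le
      linarith)
  simp only [Pi.mul_apply, sub_self, mul_zero, exp_zero, one_mul] at key
  linarith

theorem mul_integral_le_integral_mul_of_le {a b c : ℝ} {w α : ℝ → ℝ} (hab : a ≤ b)
    (hw : ∀ s ∈ Icc a b, c ≤ w s) (hα : ∀ s ∈ Icc a b, 0 ≤ α s)
    (hαi : IntervalIntegrable α volume a b)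
    (hwαi : IntervalIntegrable (fun s => w s * α s) volume a b) :
    c * ∫ s in a..b, α s ≤ ∫ s in a..b, w s * α s := by
  rw [← intervalIntegral.integral_const_mul]
  exact intervalIntegral.integral_mono_on hab (hαi.const_mul c) hwαi
    fun s hs => mul_le_mul_of_nonneg_right (hw s hs) (hα s hs)

/-- abstract contraction estimate: if u' ≤ (K - ψ₀ α(t)) Δ - K u on
[a,b] with ∫ α ≥ ᾱ and b - a ≤ T, then
u(b) ≤ e^{-K(b-a)} u(a) + (1 - ψ₀ e^{-KT} ᾱ - e^{-K(b-a)}) Δ; in particular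
u(a) ≤ Δ implies u(b) ≤ (1 - ψ₀ e^{-KT} ᾱ) Δ. -/
theorem contraction_differential_inequality
    (K ψ0 Δ a b T abar : ℝ)
    (hK : 0 ≤ K) (hψ0 : 0 ≤ ψ0) (hΔ : 0 ≤ Δ) (hab : a ≤ b) (hT : b - a ≤ T)
    (α : ℝ → ℝ) (hαcont : ContinuousOn α (Set.Icc a b))
    (hα01 : ∀ t ∈ Set.Icc a b, α t ∈ Set.Icc (0:ℝ) 1)
    (hint : abar ≤ ∫ s in a..b, α s)
    (u u' : ℝ → ℝ)
    (hderiv : ∀ t ∈ Set.Icc a b, HasDerivAt u (u' t) t)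
    (hineq : ∀ t ∈ Set.Icc a b, u' t ≤ (K - ψ0 * α t) * Δ - K * u t) :
    u b ≤ Real.exp (-K * (b - a)) * u a
        + (1 - ψ0 * Real.exp (-K * T) * abar - Real.exp (-K * (b - a))) * Δ ∧
      (u a ≤ Δ → u b ≤ (1 - ψ0 * Real.exp (-K * T) * abar) * Δ) := by
  have hduhamel := le_exp_mul_add_integral_of_deriv_le (K := K) (v := fun t => u t - Δ)
    (f := fun s => -(ψ0 * Δ * α s)) hab
    (fun t ht => ((hderiv t ht).continuousAt.sub continuousAt_const).continuousWithinAt)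
    (fun t ht => (hderiv t (Ioo_subset_Icc_self ht)).sub_const Δ)
    (hαcont.const_smul (ψ0 * Δ)).neg.integrableOn_Icc
    (fun t ht => by have := hineq t (Ioo_subset_Icc_self ht); linarith)
  have hforcing : ∫ s in a..b, exp (-K * (b - s)) * -(ψ0 * Δ * α s)
      = -(ψ0 * Δ * ∫ s in a..b, exp (-K * (b - s)) * α s) := by
    rw [← intervalIntegral.integral_const_mul, ← intervalIntegral.integral_neg]
    congr 1 with s
    ring
  have hweighted :
      exp (-K * T) * ∫ s in a..b, α s ≤ ∫ s in a..b, exp (-K * (b - s)) * α s :=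
    mul_integral_le_integral_mul_of_le (w := fun s => exp (-K * (b - s))) hab
      (fun s hs => exp_le_exp.2 (by nlinarith [hs.1]))
      (fun s hs => (hα01 s hs).1) (hαcont.intervalIntegrable_of_Icc hab)
      ((Continuous.continuousOn (by fun_prop)).mul hαcont |>.intervalIntegrable_of_Icc hab)
  have hgain :
      ψ0 * Δ * (exp (-K * T) * abar) ≤ ψ0 * Δ * ∫ s in a..b, exp (-K * (b - s)) * α s :=
    mul_le_mul_of_nonneg_left
      ((mul_le_mul_of_nonneg_left hint (exp_pos _).le).trans hweighted) (mul_nonneg hψ0 hΔ)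
  rw [hforcing] at hduhamel
  have hmain : u b ≤ exp (-K * (b - a)) * u a
      + (1 - ψ0 * exp (-K * T) * abar - exp (-K * (b - a))) * Δ := by
    linarith
  refine ⟨hmain, fun hua => ?_⟩
  linarith [mul_le_mul_of_nonneg_left hua (exp_pos (-K * (b - a))).le]
end
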